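/- arXiv:2505.20758 — 2 statements merged into one kernel-verified Lean document; each statement's English description precedes it below -/
import Mathlib

section
/- Assume N ≥ 1, q > 2, 0 < b < min{2,N}, and p = p_q^* := 2(q−b)/N + q. With c₂^* := q^{2/(q−p_q^*)} ‖Q_q^*‖₂^{2(p_q^*−2)/(p_q^*−q)} as above, the constrained infimum satisfies: m(c) = 0 for every 0 < c ≤ c₂^*, and m(c) = −∞ for every c > c₂^*. -/
open MeasureTheory Real Filter Topology RealInnerProductSpace

noncomputable section

/-- Euclidean space `ℝ^N`. -/
abbrev Euc (N : ℕ) := EuclideanSpace ℝ (Fin N)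

/-- Surrogate for membership in `D^{1,q}(ℝ^N) ∩ L²(ℝ^N)`. -/
def memD (N : ℕ) (q : ℝ) (u : Euc N → ℝ) : Prop :=
  Differentiable ℝ u ∧ Integrable (fun x => (u x) ^ 2) ∧
    Integrable (fun x => ‖gradient u x‖ ^ q)

/-- Surrogate for membership in `X := H¹(ℝ^N) ∩ D^{1,q}(ℝ^N)`. -/
def memX (N : ℕ) (q : ℝ) (u : Euc N → ℝ) : Prop :=
  Differentiable ℝ u ∧ Integrable (fun x => (u x) ^ 2) ∧
    Integrable (fun x => ‖gradient u x‖ ^ (2 : ℝ)) ∧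
    Integrable (fun x => ‖gradient u x‖ ^ q)

/-- `‖u‖₂²`. -/
def mass2 (N : ℕ) (u : Euc N → ℝ) : ℝ := ∫ x, (u x) ^ 2

/-- `‖∇u‖_r^r`. -/
def gradPow (N : ℕ) (r : ℝ) (u : Euc N → ℝ) : ℝ := ∫ x, ‖gradient u x‖ ^ r

/-- The inhomogeneous potential term `∫ |u|^p / |x|^b`. -/
def pot (N : ℕ) (p b : ℝ) (u : Euc N → ℝ) : ℝ := ∫ x, |u x| ^ p / ‖x‖ ^ b

/-- The energy functional `I`. -/
def energy (N : ℕ) (q p b : ℝ) (u : Euc N → ℝ) : ℝ :=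
  (1 / 2) * gradPow N 2 u + (1 / q) * gradPow N q u - (1 / p) * pot N p b u

/-- The constraint set `S(c)`. -/
def inS (N : ℕ) (q c : ℝ) (u : Euc N → ℝ) : Prop := memX N q u ∧ mass2 N u = c

/-- `u` is a global minimizer of `I` on `S(c)`. -/
def IsMinimizer (N : ℕ) (q p b c : ℝ) (u : Euc N → ℝ) : Prop :=
  inS N q c u ∧ ∀ v, inS N q c v → energy N q p b u ≤ energy N q p b v

/-- `u` is radially symmetric and radially decreasing with respect to some point. -/
def SymmDecr (N : ℕ) (u : Euc N → ℝ) : Prop :=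
  ∃ x₀ : Euc N, (∀ x y : Euc N, ‖x - x₀‖ = ‖y - x₀‖ → u x = u y) ∧
    (∀ x y : Euc N, ‖x - x₀‖ ≤ ‖y - x₀‖ → u y ≤ u x)

/-- Smooth compactly supported test function. -/
def IsTest (N : ℕ) (φ : Euc N → ℝ) : Prop := ContDiff ℝ (⊤ : ℕ∞) φ ∧ HasCompactSupport φ

/-- `u` weakly solves `-Δu - Δ_q u = λ u + |u|^{p-2} u |x|^{-b}` on `ℝ^N`. -/
def IsWeakSol (N : ℕ) (q p b lam : ℝ) (u : Euc N → ℝ) : Prop :=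
  ∀ φ : Euc N → ℝ, IsTest N φ →
    (∫ x, ⟪gradient u x, gradient φ x⟫)
      + (∫ x, ‖gradient u x‖ ^ (q - 2) * ⟪gradient u x, gradient φ x⟫)
    = lam * (∫ x, u x * φ x) + ∫ x, |u x| ^ (p - 2) * u x * φ x / ‖x‖ ^ b

/-- The Pohozaev functional `P`. -/
def poho (N : ℕ) (q p b : ℝ) (u : Euc N → ℝ) : ℝ :=
  gradPow N 2 u + (((N : ℝ) * (q - 2) + 2 * q) / (2 * q)) * gradPow N q u
    - (((N : ℝ) * (p - 2) + 2 * b) / (2 * p)) * pot N p b u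

/-- The Pohozaev constraint set `V(c)`. -/
def inV (N : ℕ) (q p b c : ℝ) (u : Euc N → ℝ) : Prop :=
  inS N q c u ∧ poho N q p b u = 0

/-- `γ(c) := inf_{V(c)} I`. -/
def gammaVal (N : ℕ) (q p b c : ℝ) : ℝ :=
  sInf {r : ℝ | ∃ u : Euc N → ℝ, inV N q p b c u ∧ energy N q p b u = r}

/-- `u` is a minimizer of `γ(c)`. -/
def IsGammaMinimizer (N : ℕ) (q p b c : ℝ) (u : Euc N → ℝ) : Prop :=
  inV N q p b c u ∧ ∀ v, inV N q p b c v → energy N q p b u ≤ energy N q p b v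

/-- `m(c) := inf_{S(c)} I` (as a real infimum). -/
def mVal (N : ℕ) (q p b c : ℝ) : ℝ :=
  sInf {r : ℝ | ∃ u : Euc N → ℝ, inS N q c u ∧ energy N q p b u = r}

/-- The set of masses `c > 0` with `m(c) < 0`. -/
def negMassSet (N : ℕ) (q p b : ℝ) : Set ℝ :=
  {c : ℝ | 0 < c ∧ ∃ u : Euc N → ℝ, inS N q c u ∧ energy N q p b u < 0}

/-- The `L²`-mass preserving scaling `u_t(x) := t^{N/2} u(tx)`. -/
def scaleM (N : ℕ) (t : ℝ) (u : Euc N → ℝ) : Euc N → ℝ :=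
  fun x => t ^ ((N : ℝ) / 2) * u (t • x)

/-- `Q` is the optimizer of the sharp mass-critical inhomogeneous
`L^q`-Gagliardo–Nirenberg inequality
`∫ |u|^{p_q^*}|x|^{-b} ≤ (p_q^*/‖Q‖₂^{p_q^*-2}) ‖∇u‖_q^q ‖u‖₂^{p_q^*-q}`,
i.e. a ground state of `q Δ_q Q + (p_q^* - q) Q - |x|^{-b}|Q|^{p_q^*-2}Q = 0`. -/
def IsGNOptimizerCrit (N : ℕ) (q p b : ℝ) (Q : Euc N → ℝ) : Prop :=
  memD N q Q ∧ 0 < pot N p b Q ∧ 0 < mass2 N Q ∧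
  (∀ u : Euc N → ℝ, memD N q u →
    pot N p b u ≤ (p / (mass2 N Q) ^ ((p - 2) / 2)) * gradPow N q u
      * (mass2 N u) ^ ((p - q) / 2)) ∧
  pot N p b Q = (p / (mass2 N Q) ^ ((p - 2) / 2)) * gradPow N q Q
      * (mass2 N Q) ^ ((p - q) / 2)


lemma gradient_def {N : ℕ} (f : Euc N → ℝ) (x : Euc N) :
    gradient f x = (InnerProductSpace.toDual ℝ (Euc N)).symm (fderiv ℝ f x) := rfl

lemma toDual_symm_smul {N : ℕ} (d : ℝ) (L : Euc N →L[ℝ] ℝ) :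
    (InnerProductSpace.toDual ℝ (Euc N)).symm (d • L)
      = d • (InnerProductSpace.toDual ℝ (Euc N)).symm L :=
  map_smul (InnerProductSpace.toDual ℝ (Euc N)).symm d L

/-- chain rule: scalar outer function -/
lemma gradient_scalar_comp {N : ℕ} {u : Euc N → ℝ} {φ : ℝ → ℝ} {x : Euc N} {d : ℝ}
    (hu : DifferentiableAt ℝ u x) (hφ : HasDerivAt φ d (u x)) :
    gradient (fun y => φ (u y)) x = d • gradient u x := by
  have h : fderiv ℝ (fun y => φ (u y)) x = d • fderiv ℝ u x := by
    have h2 : fderiv ℝ (φ ∘ u) x = (ContinuousLinearMap.smulRight 1 d).comp (fderiv ℝ u x) :=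
      (hφ.hasFDerivAt.comp x hu.hasFDerivAt).fderiv
    have h3 : fderiv ℝ (fun y => φ (u y)) x = fderiv ℝ (φ ∘ u) x := rfl
    rw [h3, h2]
    ext v
    simp [mul_comm]
  rw [gradient_def, gradient_def, h, toDual_symm_smul]

/-- gradient of precomposition with scalar scaling -/
lemma gradient_comp_smul {N : ℕ} {u : Euc N → ℝ} {t : ℝ} {x : Euc N}
    (hu : DifferentiableAt ℝ u (t • x)) :
    gradient (fun y => u (t • y)) x = t • gradient u (t • x) := by
  have hl : HasFDerivAt (fun y : Euc N => t • y) (t • ContinuousLinearMap.id ℝ (Euc N)) x := by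
    exact (t • ContinuousLinearMap.id ℝ (Euc N)).hasFDerivAt (x := x)
  have h : fderiv ℝ (fun y => u (t • y)) x = t • fderiv ℝ u (t • x) := by
    have h2 := (hu.hasFDerivAt.comp x hl).fderiv
    rw [show (fun y => u (t • y)) = u ∘ (fun y : Euc N => t • y) from rfl, h2]
    ext v; simp
  rw [gradient_def, gradient_def, h, toDual_symm_smul]

lemma measurable_gradient {N : ℕ} (f : Euc N → ℝ) : Measurable (gradient f) := by
  have : Measurable (fderiv ℝ f) := measurable_fderiv ℝ f
  exact ((InnerProductSpace.toDual ℝ (Euc N)).symm.continuous.measurable).comp this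

lemma integral_comp_smul'' {N : ℕ} (t : ℝ) (ht : 0 < t) (f : Euc N → ℝ) :
    ∫ x : Euc N, f (t • x) = (t ^ (N : ℝ))⁻¹ * ∫ x, f x := by
  have := MeasureTheory.Measure.integral_comp_smul (volume : Measure (Euc N)) f t
  rw [this, finrank_euclideanSpace_fin, smul_eq_mul, abs_of_nonneg
    (by positivity : (0:ℝ) ≤ (t ^ N)⁻¹), ← Real.rpow_natCast t N]

section scaling
variable {N : ℕ} {q p b : ℝ}

lemma scaleM_apply (t : ℝ) (u : Euc N → ℝ) (x : Euc N) :
    scaleM N t u x = t ^ ((N : ℝ)/2) * u (t • x) := rfl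

lemma scaleM_mass {t : ℝ} (ht : 0 < t) (u : Euc N → ℝ) :
    mass2 N (scaleM N t u) = mass2 N u := by
  have h1 : (fun x : Euc N => (scaleM N t u x) ^ 2)
      = fun x => (t ^ ((N : ℝ)/2))^2 * ((fun y => (u y)^2) (t • x)) := by
    funext x; simp only [scaleM_apply]; ring
  have h2 : ((t:ℝ) ^ ((N : ℝ)/2))^2 = t ^ (N:ℝ) := by
    rw [← Real.rpow_natCast (t ^ ((N : ℝ)/2)) 2, ← Real.rpow_mul ht.le]
    norm_num
  have h3 : (0:ℝ) < t ^ (N:ℝ) := Real.rpow_pos_of_pos ht _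
  unfold mass2
  rw [h1, MeasureTheory.integral_const_mul, integral_comp_smul'' t ht (fun y => (u y)^2), h2, ← mul_assoc,
    mul_inv_cancel₀ h3.ne', one_mul]

lemma scaleM_grad {t : ℝ} (ht : 0 < t) {u : Euc N → ℝ} (hu : Differentiable ℝ u) (x : Euc N) :
    gradient (scaleM N t u) x = (t ^ ((N : ℝ)/2 + 1)) • gradient u (t • x) := by
  have hv : DifferentiableAt ℝ (fun y : Euc N => u (t • y)) x :=
    ((hu (t • x)).comp x ((differentiable_id.const_smul t) x))
  have h1 : gradient (scaleM N t u) x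
      = (t ^ ((N : ℝ)/2)) • gradient (fun y : Euc N => u (t • y)) x :=
    gradient_scalar_comp hv (by simpa using (hasDerivAt_id _).const_mul (t ^ ((N : ℝ)/2)))
  rw [h1, gradient_comp_smul (hu (t • x)), smul_smul, Real.rpow_add ht, Real.rpow_one]

lemma scaleM_gradPow {t : ℝ} (ht : 0 < t) (r : ℝ)
    {u : Euc N → ℝ} (hu : Differentiable ℝ u) :
    gradPow N r (scaleM N t u) = t ^ (((N : ℝ)/2 + 1) * r - N) * gradPow N r u := by
  have hb : (0:ℝ) < t ^ ((N : ℝ)/2 + 1) := Real.rpow_pos_of_pos ht _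
  have h1 : (fun x : Euc N => ‖gradient (scaleM N t u) x‖ ^ r)
      = fun x => (t ^ ((N : ℝ)/2 + 1)) ^ r * ((fun y => ‖gradient u y‖ ^ r) (t • x)) := by
    funext x
    rw [scaleM_grad ht hu, norm_smul]
    simp only [Real.norm_eq_abs, abs_of_pos hb]
    rw [Real.mul_rpow hb.le (norm_nonneg _)]
  unfold gradPow
  rw [h1, MeasureTheory.integral_const_mul,
    integral_comp_smul'' t ht (fun y => ‖gradient u y‖ ^ r), ← mul_assoc]
  congr 1
  rw [← Real.rpow_mul ht.le, ← Real.rpow_neg ht.le, ← Real.rpow_add ht]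
  ring_nf

lemma scaleM_pot {t : ℝ} (ht : 0 < t) (u : Euc N → ℝ) :
    pot N p b (scaleM N t u) = t ^ (((N : ℝ)/2) * p + b - N) * pot N p b u := by
  have htb : (0:ℝ) < t ^ b := Real.rpow_pos_of_pos ht _
  have ha : (0:ℝ) < t ^ ((N : ℝ)/2) := Real.rpow_pos_of_pos ht _
  have h1 : (fun x : Euc N => |scaleM N t u x| ^ p / ‖x‖ ^ b)
      = fun x => (t ^ ((N : ℝ)/2)) ^ p * t ^ b
          * ((fun y => |u y| ^ p / ‖y‖ ^ b) (t • x)) := by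
    funext x
    have hnorm : ‖t • x‖ ^ b = t ^ b * ‖x‖ ^ b := by
      rw [norm_smul, Real.norm_eq_abs, abs_of_pos ht, Real.mul_rpow ht.le (norm_nonneg _)]
    have habs : |scaleM N t u x| ^ p = (t ^ ((N : ℝ)/2)) ^ p * |u (t • x)| ^ p := by
      rw [scaleM_apply, abs_mul, abs_of_pos ha, Real.mul_rpow ha.le (abs_nonneg _)]
    simp only [habs, hnorm]
    rw [mul_assoc, mul_div_assoc]
    congr 1
    rw [mul_div_assoc', mul_div_mul_left _ _ htb.ne']
  unfold pot
  rw [h1, MeasureTheory.integral_const_mul,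
    integral_comp_smul'' t ht (fun y => |u y| ^ p / ‖y‖ ^ b), ← mul_assoc]
  congr 1
  rw [← Real.rpow_mul ht.le, mul_assoc, ← Real.rpow_neg ht.le, ← Real.rpow_add ht,
    ← Real.rpow_add ht]
  ring_nf
end scaling

section scaling2
variable {N : ℕ} {q p b c : ℝ}

lemma scaleM_memX {t : ℝ} (ht : 0 < t) {u : Euc N → ℝ} (hu : memX N q u) :
    memX N q (scaleM N t u) := by
  obtain ⟨hd, hm, hg2, hgq⟩ := hu
  have hdiff : Differentiable ℝ (scaleM N t u) := by
    have : Differentiable ℝ (fun x : Euc N => u (t • x)) :=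
      hd.comp (differentiable_id.const_smul t)
    exact this.const_mul _
  refine ⟨hdiff, ?_, ?_, ?_⟩
  · have h1 : (fun x : Euc N => (scaleM N t u x) ^ 2)
        = fun x => (t ^ ((N : ℝ)/2))^2 * ((fun y => (u y)^2) (t • x)) := by
      funext x; simp only [scaleM_apply]; ring
    rw [h1]
    exact (((integrable_comp_smul_iff volume (fun y : Euc N => (u y)^2) ht.ne').mpr
      hm).const_mul _)
  · have h1 : (fun x : Euc N => ‖gradient (scaleM N t u) x‖ ^ (2:ℝ))
        = fun x => (t ^ ((N : ℝ)/2 + 1)) ^ (2:ℝ)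
            * ((fun y => ‖gradient u y‖ ^ (2:ℝ)) (t • x)) := by
      funext x
      rw [scaleM_grad ht hd, norm_smul]
      simp only [Real.norm_eq_abs, abs_of_pos (Real.rpow_pos_of_pos ht ((N : ℝ)/2 + 1))]
      rw [Real.mul_rpow (Real.rpow_pos_of_pos ht _).le (norm_nonneg _)]
    rw [h1]
    exact (((integrable_comp_smul_iff volume (fun y : Euc N => ‖gradient u y‖ ^ (2:ℝ))
      ht.ne').mpr hg2).const_mul _)
  · have h1 : (fun x : Euc N => ‖gradient (scaleM N t u) x‖ ^ q)
        = fun x => (t ^ ((N : ℝ)/2 + 1)) ^ q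
            * ((fun y => ‖gradient u y‖ ^ q) (t • x)) := by
      funext x
      rw [scaleM_grad ht hd, norm_smul]
      simp only [Real.norm_eq_abs, abs_of_pos (Real.rpow_pos_of_pos ht ((N : ℝ)/2 + 1))]
      rw [Real.mul_rpow (Real.rpow_pos_of_pos ht _).le (norm_nonneg _)]
    rw [h1]
    exact (((integrable_comp_smul_iff volume (fun y : Euc N => ‖gradient u y‖ ^ q)
      ht.ne').mpr hgq).const_mul _)

lemma scaleM_inS {t : ℝ} (ht : 0 < t) {u : Euc N → ℝ} (h : inS N q c u) :
    inS N q c (scaleM N t u) :=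
  ⟨scaleM_memX ht h.1, by rw [scaleM_mass ht]; exact h.2⟩

lemma scaleM_energy {t : ℝ} (ht : 0 < t) {u : Euc N → ℝ} (hu : Differentiable ℝ u)
    (hN0 : (N:ℝ) ≠ 0) (hp : p = 2 * (q - b) / (N : ℝ) + q) :
    energy N q p b (scaleM N t u)
      = t ^ (2:ℝ) * ((1/2) * gradPow N 2 u)
        + t ^ (((N : ℝ)/2 + 1) * q - N)
          * ((1/q) * gradPow N q u - (1/p) * pot N p b u) := by
  have e2 : ((N:ℝ)/2 + 1) * 2 - N = 2 := by ring
  have ep : ((N:ℝ)/2) * p + b - N = ((N:ℝ)/2 + 1) * q - N := by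
    rw [hp]; field_simp; ring
  unfold energy
  rw [scaleM_gradPow ht 2 hu, scaleM_gradPow ht q hu, scaleM_pot (b := b) (p := p) ht u,
    e2, ep]
  ring

end scaling2

section lowerbound
variable {N : ℕ} {q p b : ℝ}

lemma gradPow_nonneg (N : ℕ) (r : ℝ) (u : Euc N → ℝ) : 0 ≤ gradPow N r u :=
  integral_nonneg fun x => Real.rpow_nonneg (norm_nonneg _) r

lemma mass2_nonneg (N : ℕ) (u : Euc N → ℝ) : 0 ≤ mass2 N u :=
  integral_nonneg fun x => sq_nonneg _

lemma pot_nonneg (N : ℕ) (p b : ℝ) (u : Euc N → ℝ) : 0 ≤ pot N p b u :=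
  integral_nonneg fun x => div_nonneg (Real.rpow_nonneg (abs_nonneg _) _)
    (Real.rpow_nonneg (norm_nonneg _) _)

lemma c2_rpow {M : ℝ} (hM : 0 < M) (hq0 : 0 < q) (hpq : q < p) :
    (q ^ ((2:ℝ)/(q-p)) * M ^ ((p-2)/(p-q))) ^ ((p-q)/2) = M ^ ((p-2)/2) / q := by
  have hqp : q - p ≠ 0 := by linarith
  have hpq' : p - q ≠ 0 := by linarith
  rw [Real.mul_rpow (Real.rpow_pos_of_pos hq0 _).le (Real.rpow_pos_of_pos hM _).le,
    ← Real.rpow_mul hq0.le, ← Real.rpow_mul hM.le]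
  have e1 : (2:ℝ)/(q-p) * ((p-q)/2) = -1 := by field_simp; ring
  have e2 : (p-2)/(p-q) * ((p-q)/2) = (p-2)/2 := by field_simp
  rw [e1, e2, Real.rpow_neg_one]
  ring

/-- Part A: nonnegativity of the energy on S(c) for c ≤ c₂*. -/
lemma energy_nonneg_of_le (hq : 2 < q) (hpq : q < p) (hp0 : 0 < p)
    {Q : Euc N → ℝ} (hQ : IsGNOptimizerCrit N q p b Q)
    {c c2 : ℝ} (hc0 : 0 < c)
    (hc2 : c2 = q ^ ((2:ℝ) / (q - p)) * (mass2 N Q) ^ ((p - 2) / (p - q)))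
    (hcc : c ≤ c2) {u : Euc N → ℝ} (hu : inS N q c u) :
    (1/2) * gradPow N 2 u ≤ energy N q p b u ∧ 0 ≤ energy N q p b u := by
  obtain ⟨hmem, hmass⟩ := hu
  set M := mass2 N Q with hMdef
  have hM : 0 < M := hQ.2.2.1
  have hq0 : (0:ℝ) < q := by linarith
  have hA : (0:ℝ) < M ^ ((p-2)/2) := Real.rpow_pos_of_pos hM _
  have hGN := hQ.2.2.2.1 u ⟨hmem.1, hmem.2.1, hmem.2.2.2⟩
  rw [hmass] at hGN
  have hGq : 0 ≤ gradPow N q u := gradPow_nonneg N q u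
  have hG2 : 0 ≤ gradPow N 2 u := gradPow_nonneg N 2 u
  have hce : c ^ ((p-q)/2) ≤ M ^ ((p-2)/2) / q := by
    calc c ^ ((p-q)/2) ≤ c2 ^ ((p-q)/2) :=
          Real.rpow_le_rpow hc0.le hcc (by linarith)
      _ = M ^ ((p-2)/2) / q := by rw [hc2]; exact c2_rpow hM hq0 hpq
  have key : (1/p) * pot N p b u ≤ (1/q) * gradPow N q u := by
    have h1 : pot N p b u ≤ p / M ^ ((p-2)/2) * gradPow N q u * (M ^ ((p-2)/2) / q) := by
      refine hGN.trans ?_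
      exact mul_le_mul_of_nonneg_left hce (by positivity)
    have h2 : (1/p) * (p / M ^ ((p-2)/2) * gradPow N q u * (M ^ ((p-2)/2) / q))
        = (1/q) * gradPow N q u := by
      field_simp
    calc (1/p) * pot N p b u ≤ (1/p) * (p / M ^ ((p-2)/2) * gradPow N q u
          * (M ^ ((p-2)/2) / q)) := mul_le_mul_of_nonneg_left h1 (by positivity)
      _ = (1/q) * gradPow N q u := h2
  constructor
  · unfold energy; linarith
  · unfold energy; linarith

end lowerbound

section cutoff
open intervalIntegral

/-- smooth-ish cutoff derivative profile -/
def eta (δ t : ℝ) : ℝ := Real.smoothTransition (|t|/δ - 1)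

def phi (δ s : ℝ) : ℝ := ∫ t in (0:ℝ)..s, eta δ t

variable {δ s : ℝ}

lemma eta_cont (hδ : 0 < δ) : Continuous (eta δ) :=
  Real.smoothTransition.continuous.comp (by fun_prop)

lemma eta_nonneg : 0 ≤ eta δ s := Real.smoothTransition.nonneg _
lemma eta_le_one : eta δ s ≤ 1 := Real.smoothTransition.le_one _

lemma eta_eq_zero (hδ : 0 < δ) (h : |s| ≤ δ) : eta δ s = 0 :=
  Real.smoothTransition.zero_of_nonpos (by rw [sub_nonpos, div_le_one hδ]; exact h)

lemma eta_eq_one (hδ : 0 < δ) (h : 2*δ ≤ |s|) : eta δ s = 1 :=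
  Real.smoothTransition.one_of_one_le (by rw [le_sub_iff_add_le, le_div_iff₀ hδ]; linarith)

lemma eta_intInt (hδ : 0 < δ) (a b : ℝ) : IntervalIntegrable (eta δ) volume a b :=
  (eta_cont hδ).intervalIntegrable a b

lemma phi_hasDerivAt (hδ : 0 < δ) (s : ℝ) : HasDerivAt (phi δ) (eta δ s) s :=
  ((eta_cont hδ).integral_hasStrictDerivAt 0 s).hasDerivAt

lemma phi_abs_le (hδ : 0 < δ) (s : ℝ) : |phi δ s| ≤ |s| := by
  have := intervalIntegral.norm_integral_le_of_norm_le_const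
    (C := 1) (f := eta δ) (a := 0) (b := s) ?_
  · simpa [phi, Real.norm_eq_abs] using this
  · intro x _
    rw [Real.norm_eq_abs, abs_of_nonneg eta_nonneg]
    exact eta_le_one

lemma phi_sub_le (hδ : 0 < δ) (s : ℝ) : |phi δ s - s| ≤ 2*δ := by
  have hone : (∫ t in (0:ℝ)..s, (1:ℝ)) = s := by simp
  have hsub : phi δ s - s = ∫ t in (0:ℝ)..s, (eta δ t - 1) := by
    rw [intervalIntegral.integral_sub (eta_intInt hδ 0 s)
      (intervalIntegrable_const), hone]
    rfl
  have hbound1 : ∀ (a b : ℝ), |∫ t in a..b, (eta δ t - 1)| ≤ |b - a| := by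
    intro a b
    have := intervalIntegral.norm_integral_le_of_norm_le_const
      (C := 1) (f := fun t => eta δ t - 1) (a := a) (b := b) ?_
    · simpa [Real.norm_eq_abs] using this
    · intro x _
      have h1 := eta_nonneg (δ := δ) (s := x)
      have h2 := eta_le_one (δ := δ) (s := x)
      rw [Real.norm_eq_abs, abs_le]
      exact ⟨by simpa using by linarith, by simpa using by linarith⟩
  have hint : ∀ (a b : ℝ), IntervalIntegrable (fun t => eta δ t - 1) volume a b :=
    fun a b => ((eta_cont hδ).sub continuous_const).intervalIntegrable a b
  rw [hsub]
  rcases le_or_gt (|s|) (2*δ) with h | h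
  · exact (hbound1 0 s).trans (by simpa using h)
  · rcases le_or_gt 0 s with hs | hs
    · -- s > 2δ
      have hs2 : 2*δ < s := by rwa [abs_of_nonneg hs] at h
      have hzero : (∫ t in (2*δ)..s, (eta δ t - 1)) = 0 := by
        rw [intervalIntegral.integral_congr (g := fun _ => (0:ℝ))]
        · simp
        · intro x hx
          rw [Set.uIcc_of_le (by linarith)] at hx
          have : 2*δ ≤ |x| := by
            rw [abs_of_nonneg (by linarith [hx.1] : (0:ℝ) ≤ x)]; exact hx.1
          simp [eta_eq_one hδ this]
      have hadd : (∫ t in (0:ℝ)..(2*δ), (eta δ t - 1)) + (∫ t in (2*δ)..s, (eta δ t - 1))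
          = ∫ t in (0:ℝ)..s, (eta δ t - 1) :=
        intervalIntegral.integral_add_adjacent_intervals (hint 0 (2*δ)) (hint (2*δ) s)
      rw [← hadd, hzero, add_zero]
      exact (hbound1 0 (2*δ)).trans (by rw [sub_zero, abs_of_nonneg (by linarith)])
    · -- s < -2δ
      have hs2 : s < -(2*δ) := by
        rw [abs_of_neg hs] at h; linarith
      have hzero : (∫ t in (-(2*δ))..s, (eta δ t - 1)) = 0 := by
        rw [intervalIntegral.integral_congr (g := fun _ => (0:ℝ))]
        · simp
        · intro x hx
          rw [Set.uIcc_of_ge (by linarith)] at hx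
          have : 2*δ ≤ |x| := by
            rw [abs_of_neg (by linarith [hx.2] : x < 0)]; linarith [hx.2]
          simp [eta_eq_one hδ this]
      have hadd : (∫ t in (0:ℝ)..(-(2*δ)), (eta δ t - 1)) + (∫ t in (-(2*δ))..s, (eta δ t - 1))
          = ∫ t in (0:ℝ)..s, (eta δ t - 1) :=
        intervalIntegral.integral_add_adjacent_intervals (hint 0 (-(2*δ))) (hint (-(2*δ)) s)
      rw [← hadd, hzero, add_zero]
      exact (hbound1 0 (-(2*δ))).trans (by rw [sub_zero, abs_neg, abs_of_nonneg (by linarith)])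

lemma phi_cont (hδ : 0 < δ) : Continuous (phi δ) := by
  have : Differentiable ℝ (phi δ) := fun s => (phi_hasDerivAt hδ s).differentiableAt
  exact this.continuous

end cutoff

section trunc
variable {N : ℕ} {q p b : ℝ}

lemma trunc_grad {δ : ℝ} (hδ : 0 < δ) {Q : Euc N → ℝ} (hQd : Differentiable ℝ Q)
    (x : Euc N) :
    gradient (fun y => phi δ (Q y)) x = eta δ (Q x) • gradient Q x :=
  gradient_scalar_comp (hQd x) (phi_hasDerivAt hδ (Q x))

lemma trunc_grad_norm {δ : ℝ} (hδ : 0 < δ) {Q : Euc N → ℝ} (hQd : Differentiable ℝ Q)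
    (x : Euc N) :
    ‖gradient (fun y => phi δ (Q y)) x‖ = eta δ (Q x) * ‖gradient Q x‖ := by
  rw [trunc_grad hδ hQd, norm_smul, Real.norm_eq_abs, abs_of_nonneg eta_nonneg]

lemma trunc_memX (hq : 2 < q) {δ : ℝ} (hδ : 0 < δ) {Q : Euc N → ℝ}
    (hQd : Differentiable ℝ Q) (hQm : Integrable (fun x => (Q x)^2))
    (hQg : Integrable (fun x => ‖gradient Q x‖ ^ q)) :
    memX N q (fun y => phi δ (Q y)) := by
  have hVd : Differentiable ℝ (fun y : Euc N => phi δ (Q y)) := fun x =>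
    (phi_hasDerivAt hδ (Q x)).differentiableAt.comp x (hQd x)
  have hgradmeas : Measurable (gradient (fun y : Euc N => phi δ (Q y))) :=
    measurable_gradient _
  refine ⟨hVd, ?_, ?_, ?_⟩
  · -- L² of the function
    refine hQm.mono ((hVd.continuous.pow 2).aestronglyMeasurable) (ae_of_all _ fun x => ?_)
    have h1 : |phi δ (Q x)| ≤ |Q x| := phi_abs_le hδ (Q x)
    rw [Real.norm_eq_abs, Real.norm_eq_abs, abs_pow, abs_pow]
    exact pow_le_pow_left₀ (abs_nonneg _) h1 2
  · -- L² of the gradient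
    have hbound : Integrable (fun x => ‖gradient Q x‖ ^ q + (Q x)^2 / δ^2) :=
      hQg.add (hQm.div_const _)
    refine hbound.mono ?_ (ae_of_all _ fun x => ?_)
    · exact (((Real.continuous_rpow_const (by norm_num)).measurable).comp
        hgradmeas.norm).aestronglyMeasurable
    · rw [Real.norm_eq_abs, abs_of_nonneg (Real.rpow_nonneg (norm_nonneg _) _),
        Real.norm_eq_abs, abs_of_nonneg (by positivity)]
      rw [trunc_grad_norm hδ hQd]
      rcases le_or_gt (|Q x|) δ with h1 | h1
      · rw [eta_eq_zero hδ h1]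
        simp only [zero_mul]
        rw [Real.zero_rpow (by norm_num)]
        positivity
      · have he : eta δ (Q x) * ‖gradient Q x‖ ≤ ‖gradient Q x‖ :=
          mul_le_of_le_one_left (norm_nonneg _) eta_le_one
        have h2 : (eta δ (Q x) * ‖gradient Q x‖) ^ (2:ℝ) ≤ ‖gradient Q x‖ ^ (2:ℝ) :=
          Real.rpow_le_rpow (mul_nonneg eta_nonneg (norm_nonneg _)) he (by norm_num)
        rcases le_or_gt (‖gradient Q x‖) 1 with h3 | h3
        · have h4 : ‖gradient Q x‖ ^ (2:ℝ) ≤ 1 :=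
            Real.rpow_le_one (norm_nonneg _) h3 (by norm_num)
          have h5 : (1:ℝ) ≤ (Q x)^2 / δ^2 := by
            rw [le_div_iff₀ (by positivity), one_mul]
            calc δ^2 ≤ |Q x|^2 := pow_le_pow_left₀ hδ.le h1.le 2
              _ = (Q x)^2 := sq_abs _
          have h6 : (0:ℝ) ≤ ‖gradient Q x‖ ^ q := Real.rpow_nonneg (norm_nonneg _) _
          linarith
        · have h4 : ‖gradient Q x‖ ^ (2:ℝ) ≤ ‖gradient Q x‖ ^ q :=
            Real.rpow_le_rpow_of_exponent_le h3.le (by linarith)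
          have h5 : (0:ℝ) ≤ (Q x)^2 / δ^2 := by positivity
          linarith
  · -- L^q of the gradient
    refine hQg.mono ?_ (ae_of_all _ fun x => ?_)
    · exact (((Real.continuous_rpow_const (by linarith)).measurable).comp
        hgradmeas.norm).aestronglyMeasurable
    · rw [Real.norm_eq_abs, abs_of_nonneg (Real.rpow_nonneg (norm_nonneg _) _),
        Real.norm_eq_abs, abs_of_nonneg (Real.rpow_nonneg (norm_nonneg _) _),
        trunc_grad_norm hδ hQd]
      exact Real.rpow_le_rpow (mul_nonneg eta_nonneg (norm_nonneg _))
        (mul_le_of_le_one_left (norm_nonneg _) eta_le_one) (by linarith)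

lemma trunc_gradPow_le (hq : 2 < q) {δ : ℝ} (hδ : 0 < δ) {Q : Euc N → ℝ}
    (hQd : Differentiable ℝ Q) (hQm : Integrable (fun x => (Q x)^2))
    (hQg : Integrable (fun x => ‖gradient Q x‖ ^ q)) :
    gradPow N q (fun y => phi δ (Q y)) ≤ gradPow N q Q := by
  have hmem := trunc_memX hq hδ hQd hQm hQg
  refine integral_mono hmem.2.2.2 hQg fun x => ?_
  rw [trunc_grad_norm hδ hQd]
  exact Real.rpow_le_rpow (mul_nonneg eta_nonneg (norm_nonneg _))
    (mul_le_of_le_one_left (norm_nonneg _) eta_le_one) (by linarith)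

end trunc

section trunc2
variable {N : ℕ} {q p b : ℝ}

lemma pot_integrable {Q : Euc N → ℝ} (hP : 0 < pot N p b Q) :
    Integrable (fun x : Euc N => |Q x| ^ p / ‖x‖ ^ b) := by
  by_contra hcon
  have h0 : pot N p b Q = 0 := integral_undef hcon
  rw [h0] at hP; exact lt_irrefl 0 hP

lemma trunc_tendsto (hq : 2 < q) (hp0 : 0 < p) (hb0 : 0 < b) {Q : Euc N → ℝ}
    (hQd : Differentiable ℝ Q) (hQm : Integrable (fun x => (Q x)^2))
    (hP : 0 < pot N p b Q) :
    Tendsto (fun n : ℕ => mass2 N (fun y => phi (((n:ℝ)+1)⁻¹) (Q y))) atTop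
        (𝓝 (mass2 N Q)) ∧
    Tendsto (fun n : ℕ => pot N p b (fun y => phi (((n:ℝ)+1)⁻¹) (Q y))) atTop
        (𝓝 (pot N p b Q)) := by
  set δ : ℕ → ℝ := fun n => ((n:ℝ)+1)⁻¹ with hδdef
  have hδpos : ∀ n, 0 < δ n := fun n => by positivity
  have hδ0 : Tendsto δ atTop (𝓝 0) := by
    have := tendsto_one_div_add_atTop_nhds_zero_nat (𝕜 := ℝ)
    simpa [hδdef, one_div] using this
  have hphi_t : ∀ s : ℝ, Tendsto (fun n => phi (δ n) s) atTop (𝓝 s) := by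
    intro s
    rw [← tendsto_sub_nhds_zero_iff]
    exact squeeze_zero_norm (fun n => phi_sub_le (hδpos n) s)
      (by simpa using hδ0.const_mul 2)
  constructor
  · unfold mass2
    refine tendsto_integral_of_dominated_convergence (fun x => (Q x)^2)
      (fun n => ?_) hQm (fun n => ae_of_all _ fun x => ?_) (ae_of_all _ fun x => ?_)
    · exact ((((phi_cont (hδpos n)).comp hQd.continuous).pow 2).aestronglyMeasurable)
    · show ‖(phi (δ n) (Q x))^2‖ ≤ (Q x)^2
      rw [Real.norm_eq_abs, abs_pow, ← sq_abs (Q x)]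
      exact pow_le_pow_left₀ (abs_nonneg _) (phi_abs_le (hδpos n) (Q x)) 2
    · show Tendsto (fun n => (phi (δ n) (Q x))^2) atTop (𝓝 ((Q x)^2))
      exact (hphi_t (Q x)).pow 2
  · unfold pot
    refine tendsto_integral_of_dominated_convergence (fun x => |Q x| ^ p / ‖x‖ ^ b)
      (fun n => ?_) (pot_integrable hP) (fun n => ae_of_all _ fun x => ?_)
      (ae_of_all _ fun x => ?_)
    · refine (Measurable.div ?_ ?_).aestronglyMeasurable
      · exact ((Real.continuous_rpow_const hp0.le).comp
          (continuous_abs.comp ((phi_cont (hδpos n)).comp hQd.continuous))).measurable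
      · exact ((Real.continuous_rpow_const hb0.le).comp continuous_norm).measurable
    · show ‖|phi (δ n) (Q x)| ^ p / ‖x‖ ^ b‖ ≤ |Q x| ^ p / ‖x‖ ^ b
      rw [Real.norm_eq_abs, abs_of_nonneg (div_nonneg (Real.rpow_nonneg (abs_nonneg _) _)
        (Real.rpow_nonneg (norm_nonneg _) _)), div_eq_mul_inv, div_eq_mul_inv]
      refine mul_le_mul_of_nonneg_right ?_ (by positivity)
      exact Real.rpow_le_rpow (abs_nonneg _) (phi_abs_le (hδpos n) (Q x)) hp0.le
    · show Tendsto (fun n => |phi (δ n) (Q x)| ^ p / ‖x‖ ^ b) atTop (𝓝 (|Q x| ^ p / ‖x‖ ^ b))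
      refine Tendsto.div_const ?_ _
      have h1 : Tendsto (fun n => |phi (δ n) (Q x)|) atTop (𝓝 (|Q x|)) :=
        (continuous_abs.tendsto _).comp (hphi_t (Q x))
      exact ((Real.continuousAt_rpow_const (|Q x|) p (Or.inr hp0.le)).tendsto).comp h1
end trunc2

section amp
variable {N : ℕ} {q p b : ℝ}

lemma amp_grad {v : Euc N → ℝ} (hv : Differentiable ℝ v) (s : ℝ) (x : Euc N) :
    gradient (fun y => s * v y) x = s • gradient v x :=
  gradient_scalar_comp (hv x) (by simpa using (hasDerivAt_id (v x)).const_mul s)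

lemma amp_props (hq : 2 < q) (hp0 : 0 < p) {v : Euc N → ℝ} (hv : memX N q v)
    {s : ℝ} (hs : 0 < s) :
    memX N q (fun x => s * v x) ∧ mass2 N (fun x => s * v x) = s^2 * mass2 N v ∧
    gradPow N q (fun x => s * v x) = s ^ q * gradPow N q v ∧
    pot N p b (fun x => s * v x) = s ^ p * pot N p b v := by
  obtain ⟨hd, hm, hg2, hgq⟩ := hv
  have hgnorm : ∀ x, ‖gradient (fun y => s * v y) x‖ = s * ‖gradient v x‖ := by
    intro x
    rw [amp_grad hd s x, norm_smul, Real.norm_eq_abs, abs_of_pos hs]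
  have hsq : (fun x : Euc N => (s * v x)^2) = fun x => s^2 * (v x)^2 := by
    funext x; ring
  refine ⟨⟨hd.const_mul s, ?_, ?_, ?_⟩, ?_, ?_, ?_⟩
  · rw [hsq]; exact hm.const_mul _
  · have : (fun x : Euc N => ‖gradient (fun y => s * v y) x‖ ^ (2:ℝ))
        = fun x => s ^ (2:ℝ) * ‖gradient v x‖ ^ (2:ℝ) := by
      funext x; rw [hgnorm x, Real.mul_rpow hs.le (norm_nonneg _)]
    rw [this]; exact hg2.const_mul _
  · have : (fun x : Euc N => ‖gradient (fun y => s * v y) x‖ ^ q)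
        = fun x => s ^ q * ‖gradient v x‖ ^ q := by
      funext x; rw [hgnorm x, Real.mul_rpow hs.le (norm_nonneg _)]
    rw [this]; exact hgq.const_mul _
  · unfold mass2; rw [hsq, MeasureTheory.integral_const_mul]
  · unfold gradPow
    have : (fun x : Euc N => ‖gradient (fun y => s * v y) x‖ ^ q)
        = fun x => s ^ q * ‖gradient v x‖ ^ q := by
      funext x; rw [hgnorm x, Real.mul_rpow hs.le (norm_nonneg _)]
    rw [this, MeasureTheory.integral_const_mul]
  · unfold pot
    have : (fun x : Euc N => |s * v x| ^ p / ‖x‖ ^ b)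
        = fun x => s ^ p * (|v x| ^ p / ‖x‖ ^ b) := by
      funext x
      rw [abs_mul, abs_of_pos hs, Real.mul_rpow hs.le (abs_nonneg _), mul_div_assoc]
    rw [this, MeasureTheory.integral_const_mul]

/-- From a memX function with positive mass, rescale to any prescribed mass. -/
lemma rescale_to_mass (hq : 2 < q) (hp0 : 0 < p) {v : Euc N → ℝ} (hv : memX N q v)
    (hm : 0 < mass2 N v) {c : ℝ} (hc : 0 < c) :
    ∃ u : Euc N → ℝ, inS N q c u ∧
      gradPow N q u = ((c / mass2 N v) ^ ((1:ℝ)/2)) ^ q * gradPow N q v ∧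
      pot N p b u = ((c / mass2 N v) ^ ((1:ℝ)/2)) ^ p * pot N p b v := by
  set m := mass2 N v with hmdef
  set s := (c / m) ^ ((1:ℝ)/2) with hsdef
  have hcm : 0 < c / m := div_pos hc hm
  have hs : 0 < s := Real.rpow_pos_of_pos hcm _
  obtain ⟨hmem, hmass, hgrad, hpot⟩ := amp_props (b := b) hq hp0 hv hs
  have hs2 : s ^ 2 = c / m := by
    rw [hsdef, ← Real.rpow_natCast ((c/m) ^ ((1:ℝ)/2)) 2, ← Real.rpow_mul hcm.le]
    norm_num
  refine ⟨fun x => s * v x, ⟨hmem, ?_⟩, hgrad, hpot⟩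
  rw [hmass, hs2, div_mul_cancel₀ _ hm.ne']

end amp

section exist
variable {N : ℕ} {q p b : ℝ}

lemma exists_inS (hq : 2 < q) (hp0 : 0 < p) (hb0 : 0 < b) {Q : Euc N → ℝ}
    (hQ : IsGNOptimizerCrit N q p b Q) {c : ℝ} (hc : 0 < c) :
    ∃ u : Euc N → ℝ, inS N q c u := by
  obtain ⟨⟨hQd, hQm, hQg⟩, hPpos, hMpos, hGN, hEq⟩ := hQ
  obtain ⟨hmt, hPt⟩ := trunc_tendsto (b := b) hq hp0 hb0 hQd hQm hPpos
  obtain ⟨n, hn⟩ := (hmt.eventually (eventually_gt_nhds hMpos)).exists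
  have hδ : (0:ℝ) < ((n:ℝ)+1)⁻¹ := by positivity
  have hmemv := trunc_memX hq hδ hQd hQm hQg
  have hn' : 0 < mass2 N (fun y => phi (((n:ℝ)+1)⁻¹) (Q y)) := hn
  obtain ⟨u, hu, -, -⟩ := rescale_to_mass (b := b) hq hp0 hmemv hn' hc
  exact ⟨u, hu⟩

lemma exists_negslope (hq : 2 < q) (hp0 : 0 < p) (hpq : q < p) (hb0 : 0 < b)
    {Q : Euc N → ℝ} (hQ : IsGNOptimizerCrit N q p b Q) {c c2 : ℝ}
    (hc2 : c2 = q ^ ((2:ℝ) / (q - p)) * (mass2 N Q) ^ ((p - 2) / (p - q)))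
    (hlt : c2 < c) :
    ∃ u : Euc N → ℝ, inS N q c u ∧
      (1/q) * gradPow N q u - (1/p) * pot N p b u < 0 := by
  obtain ⟨⟨hQd, hQm, hQg⟩, hPpos, hMpos, hGN, hEq⟩ := hQ
  have hq0 : (0:ℝ) < q := by linarith
  set M := mass2 N Q with hMdef
  set G := gradPow N q Q with hGdef
  set A := M ^ ((p-2)/2) with hAdef
  set e := (p-q)/2 with hedef
  have he : 0 < e := by rw [hedef]; linarith
  have hA : 0 < A := Real.rpow_pos_of_pos hMpos _
  have hc2pos : 0 < c2 := by
    rw [hc2]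
    exact mul_pos (Real.rpow_pos_of_pos hq0 _) (Real.rpow_pos_of_pos hMpos _)
  have hc : 0 < c := lt_trans hc2pos hlt
  have hGQnn : 0 ≤ G := gradPow_nonneg N q Q
  have hGQpos : 0 < G := by
    rcases hGQnn.lt_or_eq with h | h
    · exact h
    · exfalso
      rw [← h, mul_zero, zero_mul] at hEq
      linarith
  have hce : A / q < c ^ e := by
    have h1 : c2 ^ e = A / q := by rw [hc2, hedef, hAdef]; exact c2_rpow hMpos hq0 hpq
    have h2 : c2 ^ e < c ^ e := Real.rpow_lt_rpow hc2pos.le hlt he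
    linarith
  have hRHS : (c / M) ^ e * pot N p b Q = p * G * (c ^ e / A) := by
    rw [Real.div_rpow hc.le hMpos.le, hEq]
    have hMe : M ^ e ≠ 0 := (Real.rpow_pos_of_pos hMpos e).ne'
    field_simp
  have hL : (p/q) * G < (c / M) ^ e * pot N p b Q := by
    rw [hRHS]
    have h1 : (1:ℝ)/q < c ^ e / A := by
      rw [div_lt_div_iff₀ hq0 hA]
      have := (div_lt_iff₀ hq0).mp hce
      linarith
    calc (p/q) * G = (p * G) * ((1:ℝ)/q) := by ring
      _ < (p * G) * (c ^ e / A) :=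
          mul_lt_mul_of_pos_left h1 (mul_pos hp0 hGQpos)
      _ = p * G * (c ^ e / A) := by ring
  obtain ⟨hmt, hPt⟩ := trunc_tendsto (b := b) hq hp0 hb0 hQd hQm hPpos
  have hFt : Tendsto
      (fun n : ℕ => (c / mass2 N (fun y => phi (((n:ℝ)+1)⁻¹) (Q y))) ^ e
        * pot N p b (fun y => phi (((n:ℝ)+1)⁻¹) (Q y))) atTop
      (𝓝 ((c / M) ^ e * pot N p b Q)) := by
    have h1 : Tendsto (fun n : ℕ => c / mass2 N (fun y => phi (((n:ℝ)+1)⁻¹) (Q y)))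
        atTop (𝓝 (c / M)) := tendsto_const_nhds.div hmt hMpos.ne'
    have h2 := ((Real.continuousAt_rpow_const (c / M) e (Or.inr he.le)).tendsto).comp h1
    exact h2.mul hPt
  have ev1 := hmt.eventually (eventually_gt_nhds hMpos)
  have ev2 := hFt.eventually (eventually_gt_nhds hL)
  obtain ⟨n, hn1, hn2⟩ := (ev1.and ev2).exists
  have hδ : (0:ℝ) < ((n:ℝ)+1)⁻¹ := by positivity
  set v : Euc N → ℝ := fun y => phi (((n:ℝ)+1)⁻¹) (Q y) with hvdef
  have hmemv : memX N q v := trunc_memX hq hδ hQd hQm hQg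
  have hGle : gradPow N q v ≤ G := trunc_gradPow_le hq hδ hQd hQm hQg
  have hmv : 0 < mass2 N v := hn1
  obtain ⟨u, huS, hugrad, hupot⟩ := rescale_to_mass (b := b) hq hp0 hmemv hmv hc
  set m := mass2 N v with hmdef
  set s := (c / m) ^ ((1:ℝ)/2) with hsdef
  have hcm : 0 < c / m := div_pos hc hmv
  have hs : 0 < s := Real.rpow_pos_of_pos hcm _
  have hspq : s ^ (p - q) = (c / m) ^ e := by
    rw [hsdef, ← Real.rpow_mul hcm.le, hedef]
    congr 1
    ring
  have hsum : s ^ q * s ^ (p - q) = s ^ p := by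
    rw [← Real.rpow_add hs]
    congr 1
    ring
  refine ⟨u, huS, ?_⟩
  rw [hugrad, hupot]
  have hslope : (p/q) * G < (c / m) ^ e * pot N p b v := hn2
  have hkey := mul_lt_mul_of_pos_left hslope
    (show (0:ℝ) < s ^ q / p by positivity)
  have hl : s ^ q / p * ((p/q) * G) = (1/q) * s ^ q * G := by
    field_simp
  have hr : s ^ q / p * ((c / m) ^ e * pot N p b v) = (1/p) * s ^ p * pot N p b v := by
    rw [← hspq, ← hsum]
    ring
  rw [hl, hr] at hkey
  have h3 : (1/q) * (s ^ q * gradPow N q v) ≤ (1/q) * s ^ q * G := by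
    rw [mul_assoc (1/q) (s ^ q) G]
    refine mul_le_mul_of_nonneg_left ?_ (by positivity)
    exact mul_le_mul_of_nonneg_left hGle (by positivity)
  linarith

end exist

/-- mass-critical case `p = p_q^*`. With `c₂^*` as above, `m(c) = 0`
for `0 < c ≤ c₂^*` (i.e. `0` is the greatest lower bound of `I` on `S(c)`), and
`m(c) = -∞` for `c > c₂^*` (i.e. `I` is unbounded below on `S(c)`). -/
theorem critical_infimum_value
    (N : ℕ) (q p b : ℝ) (hN : 1 ≤ N) (hq : 2 < q)
    (hb0 : 0 < b) (hb2 : b < 2) (hbN : b < (N : ℝ))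
    (hp : p = 2 * (q - b) / (N : ℝ) + q)
    (Q : Euc N → ℝ) (hQ : IsGNOptimizerCrit N q p b Q)
    (c2 : ℝ) (hc2 : c2 = q ^ (2 / (q - p)) * (mass2 N Q) ^ ((p - 2) / (p - q))) :
    (∀ c : ℝ, 0 < c → c ≤ c2 →
      IsGLB {r : ℝ | ∃ u : Euc N → ℝ, inS N q c u ∧ energy N q p b u = r} 0) ∧
    (∀ c : ℝ, c2 < c → ∀ M : ℝ, ∃ u : Euc N → ℝ, inS N q c u ∧ energy N q p b u < M) := by
  have hNpos : (0:ℝ) < N := by exact_mod_cast Nat.lt_of_lt_of_le Nat.zero_lt_one hN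
  have hN0 : (N:ℝ) ≠ 0 := hNpos.ne'
  have hq0 : (0:ℝ) < q := by linarith
  have hpq : q < p := by
    rw [hp]
    have h1 : 0 < 2 * (q - b) / (N:ℝ) := by
      apply div_pos (by linarith) hNpos
    linarith
  have hp0 : (0:ℝ) < p := by linarith
  set α : ℝ := ((N:ℝ)/2 + 1) * q - N with hα
  have hα2 : 2 < α := by
    have h1 : ((N:ℝ)/2 + 1) * 2 < ((N:ℝ)/2 + 1) * q :=
      mul_lt_mul_of_pos_left hq (by positivity)
    rw [hα]; nlinarith
  have hrp : ∀ r : ℝ, 0 < r → Tendsto (fun t : ℝ => t ^ r) (𝓝[>] (0:ℝ)) (𝓝 0) := by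
    intro r hr
    have hcont : ContinuousAt (fun t : ℝ => t ^ r) 0 :=
      Real.continuousAt_rpow_const 0 r (Or.inr hr.le)
    have h0 : (0:ℝ) ^ r = 0 := Real.zero_rpow hr.ne'
    have := hcont.tendsto
    rw [h0] at this
    exact this.mono_left nhdsWithin_le_nhds
  constructor
  · -- 0 < c ≤ c2 : m(c) = 0
    intro c hc hcle
    constructor
    · rintro r ⟨u, hu, rfl⟩
      exact (energy_nonneg_of_le hq hpq hp0 hQ hc hc2 hcle hu).2
    · intro w hw
      obtain ⟨u0, hu0⟩ := exists_inS hq hp0 hb0 hQ hc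
      set A : ℝ := (1/2) * gradPow N 2 u0 with hA
      set B : ℝ := (1/q) * gradPow N q u0 - (1/p) * pot N p b u0 with hB
      have hfor : ∀ t ∈ Set.Ioi (0:ℝ), w ≤ t ^ (2:ℝ) * A + t ^ α * B := by
        intro t ht
        have hES := scaleM_inS ht hu0
        have hE := scaleM_energy ht hu0.1.1 hN0 hp
        have hmem : energy N q p b (scaleM N t u0)
            ∈ {r : ℝ | ∃ u : Euc N → ℝ, inS N q c u ∧ energy N q p b u = r} :=
          ⟨_, hES, rfl⟩
        have := hw hmem
        rw [hE] at this
        exact this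
      have htend : Tendsto (fun t : ℝ => t ^ (2:ℝ) * A + t ^ α * B)
          (𝓝[>] (0:ℝ)) (𝓝 0) := by
        have := ((hrp 2 two_pos).mul_const A).add ((hrp α (by linarith)).mul_const B)
        simpa using this
      exact ge_of_tendsto htend (eventually_nhdsWithin_of_forall hfor)
  · -- c > c2 : unbounded below
    intro c hcc M
    obtain ⟨u0, hu0S, hB⟩ := exists_negslope hq hp0 hpq hb0 hQ hc2 hcc
    set A : ℝ := (1/2) * gradPow N 2 u0 with hA
    set B : ℝ := (1/q) * gradPow N q u0 - (1/p) * pot N p b u0 with hBd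
    have h1 : Tendsto (fun t : ℝ => t ^ (α - 2)) atTop atTop :=
      tendsto_rpow_atTop (by linarith)
    have h2 : Tendsto (fun t : ℝ => t ^ (α - 2) * B) atTop atBot :=
      h1.atTop_mul_const_of_neg hB
    have h3 : Tendsto (fun t : ℝ => A + t ^ (α - 2) * B) atTop atBot :=
      tendsto_atBot_add_const_left _ A h2
    have ev := (h3.eventually (eventually_le_atBot (min M 0 - 1))).and
      (eventually_ge_atTop (1:ℝ))
    obtain ⟨t, hts, ht1⟩ := ev.exists
    have ht0 : (0:ℝ) < t := lt_of_lt_of_le one_pos ht1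
    refine ⟨scaleM N t u0, scaleM_inS ht0 hu0S, ?_⟩
    rw [scaleM_energy ht0 hu0S.1.1 hN0 hp]
    have hsplit : t ^ α = t ^ (2:ℝ) * t ^ (α - 2) := by
      rw [← Real.rpow_add ht0]; congr 1; ring
    have ht2 : (1:ℝ) ≤ t ^ (2:ℝ) := by
      calc (1:ℝ) = 1 ^ (2:ℝ) := by norm_num
        _ ≤ t ^ (2:ℝ) := Real.rpow_le_rpow (by norm_num) ht1 (by norm_num)
    have hmin : min M 0 - 1 ≤ -1 := by
      have : min M 0 ≤ 0 := min_le_right _ _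
      linarith
    have hneg : A + t ^ (α - 2) * B ≤ 0 := by linarith
    have heq : t ^ (2:ℝ) * A + t ^ α * B = t ^ (2:ℝ) * (A + t ^ (α - 2) * B) := by
      rw [hsplit]; ring
    rw [heq]
    have hminM : min M 0 ≤ M := min_le_left _ _
    calc t ^ (2:ℝ) * (A + t ^ (α - 2) * B) ≤ 1 * (A + t ^ (α - 2) * B) :=
          mul_le_mul_of_nonpos_right ht2 hneg
      _ = A + t ^ (α - 2) * B := one_mul _
      _ ≤ min M 0 - 1 := hts
      _ < M := by linarith
end
end

section
/- Assume q > 2, 0 < b < min{2,N}, and that one of the following holds: (1) N = 1 or N = 2 and p_q^* < p < +∞; or (2) N ≥ 3 with q < 2(N²−2b)/(N²−4) and p_q^* < p < 2_b^* := 2(N−b)/(N−2). Then γ(c) → 0 as c → +∞. In particular, if u_c ∈ S(c) is a minimizer of γ(c), then I(u_c) = γ(c) → 0, ‖∇u_c‖₂ → 0, and ‖∇u_c‖_q → 0 as c → +∞. -/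
open MeasureTheory Real Filter Topology RealInnerProductSpace

noncomputable section

set_option linter.unusedSectionVars false

section arith
variable {N : ℕ} {q p b : ℝ}
variable (hN : 1 ≤ N) (hq : 2 < q) (hb0 : 0 < b) (hb2 : b < 2) (hbN : b < (N : ℝ))
  (hp1 : 2 * (q - b) / (N : ℝ) + q < p)
  (hcase : (N = 1 ∨ N = 2) ∨
      (3 ≤ N ∧ q < 2 * ((N : ℝ) ^ 2 - 2 * b) / ((N : ℝ) ^ 2 - 4) ∧
        p < 2 * ((N : ℝ) - b) / ((N : ℝ) - 2)))

include hN hq hb0 hb2 hbN hp1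

lemma key2 : 2 * (q - b) + q * N < p * N := by
  have hN0 : (0:ℝ) < N := by exact_mod_cast Nat.pos_of_ne_zero (by omega)
  have h := mul_lt_mul_of_pos_right hp1 hN0
  rw [add_mul, div_mul_cancel₀ _ hN0.ne'] at h
  exact h

lemma hp2 : 2 < p := by
  have hN0 : (0:ℝ) < N := by exact_mod_cast Nat.pos_of_ne_zero (by omega)
  nlinarith [key2 hN hq hb0 hb2 hbN hp1]

lemma hsig2 : 2 < ((N:ℝ) * (p - 2) + 2 * b) / 2 := by
  have hN0 : (0:ℝ) < N := by exact_mod_cast Nat.pos_of_ne_zero (by omega)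
  nlinarith [key2 hN hq hb0 hb2 hbN hp1]

lemma hthsig : ((N:ℝ) * (q - 2) + 2 * q) / 2 < ((N:ℝ) * (p - 2) + 2 * b) / 2 := by
  have hN0 : (0:ℝ) < N := by exact_mod_cast Nat.pos_of_ne_zero (by omega)
  nlinarith [key2 hN hq hb0 hb2 hbN hp1]

include hcase

lemma hsigp : ((N:ℝ) * (p - 2) + 2 * b) / 2 < p := by
  have hN0 : (0:ℝ) < N := by exact_mod_cast Nat.pos_of_ne_zero (by omega)
  have hp2' : 2 < p := hp2 hN hq hb0 hb2 hbN hp1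
  rcases hcase with h12 | ⟨hN3, _, hp2b⟩
  · rcases h12 with h | h <;> subst h <;> push_cast <;> nlinarith
  · have hN3' : (3:ℝ) ≤ N := by exact_mod_cast hN3
    have h2 : p * ((N:ℝ) - 2) < 2 * ((N:ℝ) - b) :=
      (lt_div_iff₀ (by linarith : (0:ℝ) < (N:ℝ) - 2)).1 hp2b
    nlinarith

lemma hqspt : q * (((N:ℝ) * (p - 2) + 2 * b) / 2) < p * (((N:ℝ) * (q - 2) + 2 * q) / 2) := by
  have hN0 : (0:ℝ) < N := by exact_mod_cast Nat.pos_of_ne_zero (by omega)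
  have hp2' : 2 < p := hp2 hN hq hb0 hb2 hbN hp1
  -- reduces to p * (N - q) < q * (N - b)
  have key : p * ((N:ℝ) - q) < q * ((N:ℝ) - b) := by
    rcases le_or_gt (N:ℝ) q with hNq | hNq
    · have h1 : p * ((N:ℝ) - q) ≤ 2 * ((N:ℝ) - q) := by nlinarith
      nlinarith
    · have hN3 : 3 ≤ N := by
        rcases hcase with h12 | ⟨hN3, _, _⟩
        · rcases h12 with h | h <;> subst h <;> push_cast at hNq <;> linarith
        · exact hN3
      have hN3' : (3:ℝ) ≤ N := by exact_mod_cast hN3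
      have hp2b : p < 2 * ((N:ℝ) - b) / ((N:ℝ) - 2) := by
        rcases hcase with h12 | ⟨_, _, h⟩
        · exfalso; rcases h12 with h | h <;> subst h <;> push_cast at hN3' <;> linarith
        · exact h
      have h2 : p * ((N:ℝ) - 2) < 2 * ((N:ℝ) - b) :=
        (lt_div_iff₀ (by linarith : (0:ℝ) < (N:ℝ) - 2)).1 hp2b
      -- p(N-q) < 2(N-b)(N-q)/(N-2) ≤ q(N-b) since 2(N-q) ≤ q(N-2)
      have h3 : 2 * ((N:ℝ) - q) ≤ q * ((N:ℝ) - 2) := by nlinarith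
      nlinarith [mul_pos (by linarith : (0:ℝ) < (N:ℝ) - b) (by linarith : (0:ℝ) < (N:ℝ) - q)]
  nlinarith

end arith


lemma alg_identity (X Y Z q p θ σ : ℝ) (hq : 0 < q) (hp : 0 < p) (hσ : 0 < σ)
    (h : X + (θ / q) * Y - (σ / p) * Z = 0) :
    (1/2) * X + (1/q) * Y - (1/p) * Z
      = (1/2 - 1/σ) * X + ((σ - θ) / (q * σ)) * Y := by
  have hZ : Z = (p / σ) * X + (p * θ / (σ * q)) * Y := by
    field_simp at h ⊢
    linear_combination (-1) * h
  rw [hZ]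
  field_simp
  ring


set_option maxHeartbeats 1000000 in
lemma exists_testfamily (N : ℕ) (hN : 1 ≤ N) (q p b : ℝ) (hq : 0 < q) (hp : 0 < p) (hb : 0 < b) :
    ∃ A B C M : ℝ, 0 < A ∧ 0 ≤ B ∧ 0 < C ∧ 0 < M ∧
      ∀ s t : ℝ, 0 < s → 0 < t → ∃ u : Euc N → ℝ,
        memX N q u ∧ mass2 N u = s ^ (2:ℝ) * M ∧
        gradPow N 2 u = s ^ (2:ℝ) * t ^ (2:ℝ) * A ∧
        gradPow N q u = s ^ q * t ^ (((N:ℝ) * (q - 2) + 2 * q) / 2) * B ∧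
        pot N p b u = s ^ p * t ^ (((N:ℝ) * (p - 2) + 2 * b) / 2) * C := by
  have hNpos : 0 < N := by omega
  set x0 : Euc N := EuclideanSpace.single (⟨0, hNpos⟩ : Fin N) (3:ℝ) with hx0def
  have hx0 : ‖x0‖ = 3 := by rw [hx0def, EuclideanSpace.norm_single]; norm_num
  set w : ContDiffBump x0 := ⟨1, 2, one_pos, one_lt_two⟩ with hwdef
  have hsm : ContDiff ℝ ((⊤:ℕ∞) : WithTop ℕ∞) w := w.contDiff
  have hcs : HasCompactSupport w := w.hasCompactSupport
  have hwc : Continuous w := hsm.continuous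
  have hdiff : Differentiable ℝ w := hsm.differentiable (by simp)
  have hfar : ∀ y : Euc N, ‖y‖ < 1 → w y = 0 := by
    intro y hy
    apply w.zero_of_le_dist
    have h1 : ‖x0‖ - ‖y‖ ≤ ‖x0 - y‖ := norm_sub_norm_le x0 y
    have h2 : dist y x0 = ‖x0 - y‖ := by rw [dist_comm, dist_eq_norm]
    have : w.rOut = 2 := rfl
    rw [this, h2]; rw [hx0] at h1; linarith
  have hw0 : w 0 = 0 := hfar 0 (by simp)
  have hwx0 : w x0 = 1 := w.one_of_mem_closedBall (Metric.mem_closedBall_self w.rIn_pos.le)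
  have hgc : Continuous (gradient w) :=
    (InnerProductSpace.toDual ℝ (Euc N)).symm.continuous.comp
      (hsm.continuous_fderiv (by simp))
  have hgcs : HasCompactSupport (gradient w) :=
    (hcs.fderiv (𝕜 := ℝ)).comp_left (g := (InnerProductSpace.toDual ℝ (Euc N)).symm) (map_zero _)
  have hFr : ∀ r : ℝ, 0 < r → Continuous (fun y => ‖gradient w y‖ ^ r) ∧
      Integrable (fun y => ‖gradient w y‖ ^ r) := by
    intro r hr
    have hc : Continuous fun y => ‖gradient w y‖ ^ r := hgc.norm.rpow_const fun _ => Or.inr hr.le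
    have hs : HasCompactSupport fun y => ‖gradient w y‖ ^ r := by
      have := hgcs.norm.comp_left (g := fun z : ℝ => z ^ r) (Real.zero_rpow hr.ne')
      simpa [Function.comp_def] using this
    exact ⟨hc, hc.integrable_of_hasCompactSupport hs⟩
  have hW2c : Continuous fun y => (w y) ^ 2 := hwc.pow 2
  have hW2s : HasCompactSupport fun y => (w y) ^ 2 := by
    have := hcs.comp_left (g := fun z : ℝ => z ^ 2) (by norm_num)
    simpa [Function.comp_def] using this
  have hW2i : Integrable fun y => (w y) ^ 2 := hW2c.integrable_of_hasCompactSupport hW2s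
  set g : Euc N → ℝ := fun y => |w y| ^ p / ‖y‖ ^ b with hgdef
  have hg0 : ∀ y, w y = 0 → g y = 0 := by
    intro y hy; simp only [hgdef, hy, abs_zero, Real.zero_rpow hp.ne', zero_div]
  have hgcont : Continuous g := by
    rw [continuous_iff_continuousAt]; intro y
    rcases eq_or_ne y 0 with rfl | hy
    · have hev : (fun _ : Euc N => (0:ℝ)) =ᶠ[𝓝 (0 : Euc N)] g := by
        filter_upwards [Metric.ball_mem_nhds (0 : Euc N) one_pos] with z hz
        exact (hg0 z (hfar z (by simpa [dist_zero_right] using hz))).symm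
      exact ContinuousAt.congr continuousAt_const hev
    · exact ContinuousAt.div
        ((hwc.abs.rpow_const fun _ => Or.inr hp.le).continuousAt)
        ((continuous_norm.rpow_const fun _ => Or.inr hb.le).continuousAt)
        (Real.rpow_pos_of_pos (norm_pos_iff.2 hy) b).ne'
  have hgs : HasCompactSupport g := by
    apply hcs.mono'
    intro y hy
    have : w y ≠ 0 := by
      intro h0; exact hy (hg0 y h0)
    exact subset_tsupport _ this
  have hgi : Integrable g := hgcont.integrable_of_hasCompactSupport hgs
  have hgrad_ne : ∃ y0, gradient (⇑w) y0 ≠ 0 := by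
    by_contra h
    push_neg at h
    have hfz : ∀ z, fderiv ℝ (⇑w) z = 0 := by
      intro z
      have := congrArg (InnerProductSpace.toDual ℝ (Euc N)) (h z)
      simpa [gradient] using this
    have := is_const_of_fderiv_eq_zero hdiff hfz x0 0
    rw [hwx0, hw0] at this; exact one_ne_zero this
  have hposgen : ∀ f : Euc N → ℝ, (0 ≤ f) → Integrable f → Continuous f →
      (∃ y, f y ≠ 0) → 0 < ∫ x, f x := by
    intro f hf hfi hfc ⟨y, hy⟩
    rw [integral_pos_iff_support_of_nonneg hf hfi]
    have hop : IsOpen (Function.support f) := by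
      rw [Function.support_eq_preimage]
      exact isOpen_compl_singleton.preimage hfc
    exact hop.measure_pos volume ⟨y, hy⟩
  refine ⟨gradPow N 2 w, gradPow N q w, pot N p b w, mass2 N w, ?_, ?_, ?_, ?_, ?_⟩
  · obtain ⟨y0, hy0⟩ := hgrad_ne
    apply hposgen _ (fun y => Real.rpow_nonneg (norm_nonneg _) _) (hFr 2 two_pos).2 (hFr 2 two_pos).1
    exact ⟨y0, (Real.rpow_pos_of_pos (norm_pos_iff.2 hy0) 2).ne'⟩
  · exact integral_nonneg fun y => Real.rpow_nonneg (norm_nonneg _) _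
  · apply hposgen _ ?_ hgi hgcont ⟨x0, ?_⟩
    · intro y; exact div_nonneg (Real.rpow_nonneg (abs_nonneg _) _) (Real.rpow_nonneg (norm_nonneg _) _)
    · rw [hgdef]
      simp only [hwx0, abs_one, Real.one_rpow, hx0]
      exact (div_pos one_pos (Real.rpow_pos_of_pos (by norm_num) b)).ne'
  · apply hposgen _ (fun y => sq_nonneg _) hW2i hW2c ⟨x0, ?_⟩
    rw [hwx0]; norm_num
  · intro s t hs ht
    set a : ℝ := s * t ^ ((N:ℝ)/2) with hadef
    have ha : 0 < a := by positivity
    have hat : 0 < a * t := by positivity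
    have htN : (0:ℝ) < t ^ (N:ℕ) := by positivity
    -- gradient formula
    have hgradu : ∀ x, gradient (fun y => a * w (t • y)) x = (a * t) • gradient (⇑w) (t • x) := by
      intro x
      have h1 : HasFDerivAt (fun y : Euc N => t • y) (t • (ContinuousLinearMap.id ℝ (Euc N))) x :=
        (hasFDerivAt_id x).const_smul t
      have h2 : HasFDerivAt (⇑w) (fderiv ℝ (⇑w) (t • x)) (t • x) :=
        (hdiff (t • x)).hasFDerivAt
      have h4 := (h2.comp x h1).const_mul a
      simp only [Function.comp] at h4
      have h5 : fderiv ℝ (fun y => a * w (t • y)) x = (a * t) • fderiv ℝ (⇑w) (t • x) := by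
        rw [h4.fderiv, ContinuousLinearMap.comp_smul, ContinuousLinearMap.comp_id, smul_smul]
      rw [gradient, h5, _root_.map_smul]
      rfl
    have hnormu : ∀ x, ‖gradient (fun y => a * w (t • y)) x‖
        = (a * t) * ‖gradient (⇑w) (t • x)‖ := by
      intro x; rw [hgradu x, norm_smul, Real.norm_eq_abs, abs_of_pos hat]
    -- change of variables
    have hcomp : ∀ f : Euc N → ℝ, ∫ x, f (t • x) = (t ^ (N:ℕ))⁻¹ * ∫ y, f y := by
      intro f
      rw [MeasureTheory.Measure.integral_comp_smul_of_nonneg volume f t (hR := ht.le)]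
      rw [finrank_euclideanSpace_fin, smul_eq_mul]
    -- rpow helpers
    have hmul : ∀ α β : ℝ, t ^ α * t ^ β = t ^ (α + β) := fun α β => (Real.rpow_add ht α β).symm
    have htinv : (t ^ (N:ℕ))⁻¹ = t ^ (-(N:ℝ)) := by
      rw [← Real.rpow_natCast t N, ← Real.rpow_neg ht.le]
    have hat_eq : a * t = s * t ^ ((N:ℝ)/2 + 1) := by
      rw [Real.rpow_add ht, Real.rpow_one, hadef]; ring
    have hatr : ∀ r : ℝ, (a * t) ^ r = s ^ r * t ^ (((N:ℝ)/2 + 1) * r) := by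
      intro r
      rw [hat_eq, Real.mul_rpow hs.le (Real.rpow_nonneg ht.le _), ← Real.rpow_mul ht.le]
    have har : ∀ r : ℝ, a ^ r = s ^ r * t ^ (((N:ℝ)/2) * r) := by
      intro r
      rw [hadef, Real.mul_rpow hs.le (Real.rpow_nonneg ht.le _), ← Real.rpow_mul ht.le]
    -- gradPow computation
    have hgp : ∀ r : ℝ, 0 < r → gradPow N r (fun y => a * w (t • y))
        = (a * t) ^ r * ((t ^ (N:ℕ))⁻¹ * gradPow N r (⇑w)) := by
      intro r hr
      unfold gradPow
      have hpt : ∀ x : Euc N, ‖gradient (fun y => a * w (t • y)) x‖ ^ r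
          = (a * t) ^ r * (fun y => ‖gradient (⇑w) y‖ ^ r) (t • x) := by
        intro x; rw [hnormu x, Real.mul_rpow hat.le (norm_nonneg _)]
      simp_rw [hpt]
      rw [MeasureTheory.integral_const_mul]
      congr 1
      exact hcomp (fun y => ‖gradient (⇑w) y‖ ^ r)
    -- mass2 computation
    have hmass : mass2 N (fun y => a * w (t • y)) = a ^ (2:ℝ) * ((t ^ (N:ℕ))⁻¹ * mass2 N (⇑w)) := by
      unfold mass2
      have hpt : ∀ x : Euc N, (a * w (t • x)) ^ 2 = a ^ (2:ℝ) * (fun y => (w y) ^ 2) (t • x) := by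
        intro x
        rw [mul_pow]
        congr 1
        rw [← Real.rpow_natCast a 2]; norm_num
      simp_rw [hpt]
      rw [MeasureTheory.integral_const_mul]
      congr 1
      exact hcomp (fun y => (w y) ^ 2)
    -- pot computation
    have hpotpt : ∀ x : Euc N, |a * w (t • x)| ^ p / ‖x‖ ^ b
        = (a ^ p * t ^ b) * g (t • x) := by
      intro x
      rcases eq_or_ne x 0 with rfl | hx
      · simp only [smul_zero, hw0, mul_zero, abs_zero, Real.zero_rpow hp.ne', zero_div, hgdef]
      · have hxn : 0 < ‖x‖ := norm_pos_iff.2 hx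
        have htx : ‖t • x‖ = t * ‖x‖ := by rw [norm_smul, Real.norm_eq_abs, abs_of_pos ht]
        have h1 : |a * w (t • x)| ^ p = a ^ p * |w (t • x)| ^ p := by
          rw [abs_mul, abs_of_pos ha, Real.mul_rpow ha.le (abs_nonneg _)]
        have h2 : ‖t • x‖ ^ b = t ^ b * ‖x‖ ^ b := by
          rw [htx, Real.mul_rpow ht.le (norm_nonneg _)]
        rw [hgdef]
        simp only [h1, h2]
        have hb1 : (0:ℝ) < t ^ b := Real.rpow_pos_of_pos ht b
        have hb2 : (0:ℝ) < ‖x‖ ^ b := Real.rpow_pos_of_pos hxn b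
        field_simp
    have hpot : pot N p b (fun y => a * w (t • y))
        = (a ^ p * t ^ b) * ((t ^ (N:ℕ))⁻¹ * pot N p b (⇑w)) := by
      unfold pot
      simp_rw [hpotpt]
      rw [MeasureTheory.integral_const_mul]
      congr 1
      exact hcomp g
    refine ⟨fun x => a * w (t • x), ⟨?_, ?_, ?_, ?_⟩, ?_, ?_, ?_, ?_⟩
    · -- Differentiable
      exact (hdiff.comp ((differentiable_id).const_smul t)).const_mul a
    · -- Integrable u^2
      have heq : (fun x => (a * w (t • x)) ^ 2)
          = fun x => a ^ 2 * (fun y => (w y) ^ 2) (t • x) := by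
        funext x; simp [mul_pow]
      rw [heq]
      exact ((integrable_comp_smul_iff volume _ ht.ne').2 hW2i).const_mul _
    · -- Integrable ‖grad‖^2
      have heq : (fun x => ‖gradient (fun y => a * w (t • y)) x‖ ^ (2:ℝ))
          = fun x => (a*t) ^ (2:ℝ) * (fun y => ‖gradient (⇑w) y‖ ^ (2:ℝ)) (t • x) := by
        funext x; rw [hnormu x, Real.mul_rpow hat.le (norm_nonneg _)]
      rw [heq]
      exact ((integrable_comp_smul_iff volume _ ht.ne').2 (hFr 2 two_pos).2).const_mul _
    · -- Integrable ‖grad‖^q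
      have heq : (fun x => ‖gradient (fun y => a * w (t • y)) x‖ ^ q)
          = fun x => (a*t) ^ q * (fun y => ‖gradient (⇑w) y‖ ^ q) (t • x) := by
        funext x; rw [hnormu x, Real.mul_rpow hat.le (norm_nonneg _)]
      rw [heq]
      exact ((integrable_comp_smul_iff volume _ ht.ne').2 (hFr q hq).2).const_mul _
    · -- mass2 value
      rw [hmass, har, htinv]
      calc s ^ (2:ℝ) * t ^ ((N:ℝ)/2 * 2) * (t ^ (-(N:ℝ)) * mass2 N (⇑w))
          = s ^ (2:ℝ) * (t ^ ((N:ℝ)/2 * 2) * t ^ (-(N:ℝ))) * mass2 N (⇑w) := by ring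
        _ = s ^ (2:ℝ) * t ^ ((N:ℝ)/2 * 2 + -(N:ℝ)) * mass2 N (⇑w) := by rw [hmul]
        _ = s ^ (2:ℝ) * mass2 N (⇑w) := by
            rw [show (N:ℝ)/2 * 2 + -(N:ℝ) = 0 by ring, Real.rpow_zero, mul_one]
    · -- gradPow 2 value
      rw [hgp 2 two_pos, hatr, htinv]
      calc s ^ (2:ℝ) * t ^ (((N:ℝ)/2 + 1) * 2) * (t ^ (-(N:ℝ)) * gradPow N 2 (⇑w))
          = s ^ (2:ℝ) * (t ^ (((N:ℝ)/2 + 1) * 2) * t ^ (-(N:ℝ))) * gradPow N 2 (⇑w) := by ring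
        _ = s ^ (2:ℝ) * t ^ (((N:ℝ)/2 + 1) * 2 + -(N:ℝ)) * gradPow N 2 (⇑w) := by rw [hmul]
        _ = s ^ (2:ℝ) * t ^ (2:ℝ) * gradPow N 2 (⇑w) := by
            rw [show ((N:ℝ)/2 + 1) * 2 + -(N:ℝ) = 2 by ring]
    · -- gradPow q value
      rw [hgp q hq, hatr, htinv]
      calc s ^ q * t ^ (((N:ℝ)/2 + 1) * q) * (t ^ (-(N:ℝ)) * gradPow N q (⇑w))
          = s ^ q * (t ^ (((N:ℝ)/2 + 1) * q) * t ^ (-(N:ℝ))) * gradPow N q (⇑w) := by ring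
        _ = s ^ q * t ^ (((N:ℝ)/2 + 1) * q + -(N:ℝ)) * gradPow N q (⇑w) := by rw [hmul]
        _ = s ^ q * t ^ (((N:ℝ) * (q - 2) + 2 * q) / 2) * gradPow N q (⇑w) := by
            rw [show ((N:ℝ)/2 + 1) * q + -(N:ℝ) = ((N:ℝ) * (q - 2) + 2 * q) / 2 by ring]
    · -- pot value
      rw [hpot, har]
      calc s ^ p * t ^ ((N:ℝ)/2 * p) * t ^ b * ((t ^ (N:ℕ))⁻¹ * pot N p b (⇑w))
          = s ^ p * (t ^ ((N:ℝ)/2 * p) * t ^ b * (t ^ (N:ℕ))⁻¹) * pot N p b (⇑w) := by ring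
        _ = s ^ p * (t ^ ((N:ℝ)/2 * p + b) * t ^ (-(N:ℝ))) * pot N p b (⇑w) := by
            rw [hmul, htinv]
        _ = s ^ p * t ^ ((N:ℝ)/2 * p + b + -(N:ℝ)) * pot N p b (⇑w) := by rw [hmul]
        _ = s ^ p * t ^ (((N:ℝ) * (p - 2) + 2 * b) / 2) * pot N p b (⇑w) := by
            rw [show (N:ℝ)/2 * p + b + -(N:ℝ) = ((N:ℝ) * (p - 2) + 2 * b) / 2 by ring]


set_option maxHeartbeats 2000000 in
/-- under condition (1) `N = 1, 2` or (2) `N ≥ 3`,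
`q < 2(N²-2b)/(N²-4)` and `p < 2_b^*`, one has `γ(c) → 0` as `c → +∞`; in particular
for any family of minimizers `U c` of `γ(c)`, `I(U c) → 0`, `‖∇(U c)‖₂ → 0` and
`‖∇(U c)‖_q → 0` as `c → +∞`. -/
theorem gamma_vanishes_at_infinity
    (N : ℕ) (q p b : ℝ) (hN : 1 ≤ N) (hq : 2 < q)
    (hb0 : 0 < b) (hb2 : b < 2) (hbN : b < (N : ℝ))
    (hp1 : 2 * (q - b) / (N : ℝ) + q < p)
    (hcase : (N = 1 ∨ N = 2) ∨
      (3 ≤ N ∧ q < 2 * ((N : ℝ) ^ 2 - 2 * b) / ((N : ℝ) ^ 2 - 4) ∧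
        p < 2 * ((N : ℝ) - b) / ((N : ℝ) - 2))) :
    Tendsto (gammaVal N q p b) atTop (𝓝 0) ∧
    ∀ U : ℝ → Euc N → ℝ, (∀ c : ℝ, 0 < c → IsGammaMinimizer N q p b c (U c)) →
      Tendsto (fun c => energy N q p b (U c)) atTop (𝓝 0) ∧
      Tendsto (fun c => (gradPow N 2 (U c)) ^ ((1 : ℝ) / 2)) atTop (𝓝 0) ∧
      Tendsto (fun c => (gradPow N q (U c)) ^ (1 / q)) atTop (𝓝 0) := by

  classical
  have hN0 : (0:ℝ) < N := by exact_mod_cast Nat.pos_of_ne_zero (by omega)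
  have hq0 : (0:ℝ) < q := by linarith
  have hp2' : 2 < p := hp2 hN hq hb0 hb2 hbN hp1
  have hp0 : (0:ℝ) < p := by linarith
  set σ : ℝ := ((N:ℝ) * (p - 2) + 2 * b) / 2 with hσdef
  set θ : ℝ := ((N:ℝ) * (q - 2) + 2 * q) / 2 with hθdef
  have hσ2 : 2 < σ := hsig2 hN hq hb0 hb2 hbN hp1
  have hθσ : θ < σ := hthsig hN hq hb0 hb2 hbN hp1
  have hσp : σ < p := hsigp hN hq hb0 hb2 hbN hp1 hcase
  have hqσpθ : q * σ < p * θ := hqspt hN hq hb0 hb2 hbN hp1 hcase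
  have hσ0 : 0 < σ := by linarith
  have hθ0 : 0 < θ := by
    rw [hθdef]
    have h1 : 0 < (N:ℝ) * (q - 2) := mul_pos hN0 (by linarith)
    linarith
  -- representation of the energy on the Pohozaev manifold
  have hrepr : ∀ u : Euc N → ℝ, poho N q p b u = 0 →
      energy N q p b u
        = (1/2 - 1/σ) * gradPow N 2 u + ((σ - θ)/(q * σ)) * gradPow N q u := by
    intro u hu
    unfold poho at hu
    rw [show ((N:ℝ)*(q-2)+2*q)/(2*q) = θ/q from by rw [hθdef]; ring,
      show ((N:ℝ)*(p-2)+2*b)/(2*p) = σ/p from by rw [hσdef]; ring] at hu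
    exact alg_identity _ _ _ q p θ σ hq0 hp0 hσ0 hu
  have hXnn : ∀ u : Euc N → ℝ, 0 ≤ gradPow N 2 u :=
    fun u => integral_nonneg fun x => Real.rpow_nonneg (norm_nonneg _) _
  have hYnn : ∀ u : Euc N → ℝ, 0 ≤ gradPow N q u :=
    fun u => integral_nonneg fun x => Real.rpow_nonneg (norm_nonneg _) _
  have hd1 : 0 < 1/2 - 1/σ := by
    have : 1/σ < 1/2 := one_div_lt_one_div_of_lt two_pos hσ2
    linarith
  have hd2 : 0 < (σ - θ)/(q * σ) := div_pos (by linarith) (by positivity)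
  have helem : ∀ u : Euc N → ℝ, poho N q p b u = 0 → 0 ≤ energy N q p b u := by
    intro u hu
    rw [hrepr u hu]
    exact add_nonneg (mul_nonneg hd1.le (hXnn u)) (mul_nonneg hd2.le (hYnn u))
  have hgann : ∀ c : ℝ, 0 ≤ gammaVal N q p b c := by
    intro c
    apply Real.sInf_nonneg
    rintro r ⟨u, ⟨_, hpoho⟩, rfl⟩
    exact helem u hpoho
  have hbdd : ∀ c : ℝ, BddBelow {r : ℝ | ∃ u, inV N q p b c u ∧ energy N q p b u = r} := by
    intro c
    refine ⟨0, ?_⟩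
    rintro r ⟨u, ⟨_, hpoho⟩, rfl⟩
    exact helem u hpoho
  -- the test family
  obtain ⟨A, B, C, M, hA, hB, hC, hM, hfam⟩ := exists_testfamily N hN q p b hq0 hp0 hb0
  set e1 : ℝ := 2 + -(p/σ) * 2 with he1def
  set e2 : ℝ := q + -(p/σ) * θ with he2def
  have hpσ1 : 1 < p / σ := (one_lt_div hσ0).2 hσp
  have he1 : e1 < 0 := by rw [he1def]; nlinarith
  have he2 : e2 < 0 := by
    rw [he2def]
    have h1 : q < (p * θ)/σ := (lt_div_iff₀ hσ0).2 hqσpθ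
    have h2 : -(p/σ) * θ = -((p * θ)/σ) := by ring
    linarith
  set sc : ℝ → ℝ := fun c => (c / M) ^ ((1:ℝ)/2) with hscdef
  have hsc_tend : Tendsto sc atTop atTop :=
    (tendsto_rpow_atTop (by norm_num : (0:ℝ) < 1/2)).comp
      (Tendsto.atTop_div_const hM tendsto_id)
  have hrp : ∀ e : ℝ, e < 0 → Tendsto (fun c => sc c ^ e) atTop (𝓝 0) := by
    intro e he
    have h := tendsto_rpow_neg_atTop (show 0 < -e by linarith)
    have h2 : Tendsto (fun x : ℝ => x ^ e) atTop (𝓝 0) := by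
      convert h using 2
      rw [neg_neg]
    exact h2.comp hsc_tend
  have hupper_tend : Tendsto (fun c => A * sc c ^ e1 + B * sc c ^ e2) atTop (𝓝 0) := by
    have := ((hrp e1 he1).const_mul A).add ((hrp e2 he2).const_mul B)
    simpa using this
  -- the key eventual upper bound for gammaVal
  have hkey : ∀ᶠ c in atTop, gammaVal N q p b c ≤ A * sc c ^ e1 + B * sc c ^ e2 := by
    have hev2 : ∀ᶠ c in atTop, A * sc c ^ e1 + (θ/q) * B * sc c ^ e2 < (σ/p) * C := by
      have htend : Tendsto (fun c => A * sc c ^ e1 + (θ/q) * B * sc c ^ e2) atTop (𝓝 0) := by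
        have := ((hrp e1 he1).const_mul A).add ((hrp e2 he2).const_mul ((θ/q) * B))
        simpa using this
      exact htend.eventually_lt_const (by positivity)
    filter_upwards [eventually_gt_atTop 0, hev2] with c hc hGneg
    set s : ℝ := sc c with hsdef
    have hcM : 0 < c / M := div_pos hc hM
    have hs : 0 < s := by
      rw [hsdef, hscdef]
      exact Real.rpow_pos_of_pos hcM _
    set G : ℝ → ℝ := fun τ => A * s ^ (2:ℝ) * τ ^ (2:ℝ) + (θ/q) * B * s ^ q * τ ^ θ
        - (σ/p) * C * s ^ p * τ ^ σ with hGdef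
    set t0 : ℝ := s ^ (-(p/σ)) with ht0def
    have ht0 : 0 < t0 := Real.rpow_pos_of_pos hs _
    have hspow : ∀ α β : ℝ, s ^ α * (s ^ (-(p/σ))) ^ β = s ^ (α + -(p/σ) * β) := by
      intro α β
      rw [← Real.rpow_mul hs.le, ← Real.rpow_add hs]
    have hGt0 : G t0 < 0 := by
      rw [hGdef]
      simp only [ht0def]
      rw [mul_assoc A, hspow, mul_assoc ((θ/q) * B), hspow, mul_assoc ((σ/p) * C), hspow,
        show p + -(p/σ) * σ = 0 from by field_simp; ring, Real.rpow_zero, mul_one,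
        ← he1def, ← he2def]
      have : A * s ^ e1 + θ / q * B * s ^ e2 < σ / p * C := by
        rw [hsdef]; exact hGneg
      linarith
    set K : ℝ := (A * s ^ (2:ℝ) * p) / (σ * C * s ^ p) with hKdef
    have hK : 0 < K := by
      rw [hKdef]
      exact div_pos (mul_pos (mul_pos hA (Real.rpow_pos_of_pos hs _)) hp0)
        (mul_pos (mul_pos hσ0 hC) (Real.rpow_pos_of_pos hs _))
    set δ : ℝ := (K/2) ^ (1/(σ - 2)) with hδdef
    have hδ : 0 < δ := Real.rpow_pos_of_pos (by linarith) _
    set t1 : ℝ := min t0 δ with ht1def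
    have ht1 : 0 < t1 := lt_min ht0 hδ
    have ht1t0 : t1 ≤ t0 := min_le_left _ _
    have ht1σ2 : t1 ^ (σ - 2) < K := by
      have h1 : t1 ^ (σ-2) ≤ δ ^ (σ-2) :=
        Real.rpow_le_rpow ht1.le (min_le_right _ _) (by linarith)
      have h2 : δ ^ (σ-2) = K/2 := by
        rw [hδdef, ← Real.rpow_mul (by linarith : (0:ℝ) ≤ K/2), one_div,
          inv_mul_cancel₀ (by intro h; rw [sub_eq_zero] at h; linarith), Real.rpow_one]
      linarith
    have hGt1 : 0 < G t1 := by
      rw [hGdef]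
      have hmid : 0 ≤ (θ/q) * B * s ^ q * t1 ^ θ :=
        mul_nonneg (mul_nonneg (mul_nonneg (div_nonneg hθ0.le hq0.le) hB)
          (Real.rpow_nonneg hs.le _)) (Real.rpow_nonneg ht1.le _)
      have hsplit : t1 ^ σ = t1 ^ (2:ℝ) * t1 ^ (σ - 2) := by
        rw [← Real.rpow_add ht1]; norm_num
      have hlast : (σ/p) * C * s ^ p * t1 ^ σ < A * s ^ (2:ℝ) * t1 ^ (2:ℝ) := by
        rw [hsplit]
        have hstep : (σ/p) * C * s ^ p * (t1 ^ (2:ℝ) * t1 ^ (σ-2))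
            < (σ/p) * C * s ^ p * (t1 ^ (2:ℝ) * K) := by
          apply mul_lt_mul_of_pos_left
          · exact mul_lt_mul_of_pos_left ht1σ2 (Real.rpow_pos_of_pos ht1 _)
          · exact mul_pos (mul_pos (div_pos hσ0 hp0) hC) (Real.rpow_pos_of_pos hs _)
        have heq : (σ/p) * C * s ^ p * (t1 ^ (2:ℝ) * K) = A * s ^ (2:ℝ) * t1 ^ (2:ℝ) := by
          rw [hKdef]
          have h1 : (σ:ℝ) ≠ 0 := hσ0.ne'
          have h2 : (p:ℝ) ≠ 0 := hp0.ne'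
          have h3 : C ≠ 0 := hC.ne'
          have h4 : s ^ p ≠ 0 := (Real.rpow_pos_of_pos hs p).ne'
          field_simp
        linarith
      linarith
    have hGc : ContinuousOn G (Set.Icc t1 t0) := by
      intro τ hτ
      have hτ0 : τ ≠ 0 := (lt_of_lt_of_le ht1 hτ.1).ne'
      have hpowc : ∀ e : ℝ, ContinuousAt (fun τ : ℝ => τ ^ e) τ :=
        fun e => Real.continuousAt_rpow_const τ e (Or.inl hτ0)
      rw [hGdef]
      apply ContinuousAt.continuousWithinAt
      exact ContinuousAt.sub
        (ContinuousAt.add (continuousAt_const.mul (hpowc 2)) (continuousAt_const.mul (hpowc θ)))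
        (continuousAt_const.mul (hpowc σ))
    obtain ⟨τ, hτmem, hGτ⟩ := intermediate_value_Icc' ht1t0 hGc ⟨hGt0.le, hGt1.le⟩
    have hτpos : 0 < τ := lt_of_lt_of_le ht1 hτmem.1
    have hτt0 : τ ≤ t0 := hτmem.2
    obtain ⟨u, hmemX, hmass, hgp2, hgpq, hpotu⟩ := hfam s τ hs hτpos
    rw [← hθdef] at hgpq
    rw [← hσdef] at hpotu
    have hpoho : poho N q p b u = 0 := by
      unfold poho
      rw [hgp2, hgpq, hpotu,
        show ((N:ℝ)*(q-2)+2*q)/(2*q) = θ/q from by rw [hθdef]; ring,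
        show ((N:ℝ)*(p-2)+2*b)/(2*p) = σ/p from by rw [hσdef]; ring,
        ← hGτ, hGdef]
      ring
    have hmass' : mass2 N u = c := by
      rw [hmass, hsdef, hscdef]
      simp only
      rw [← Real.rpow_mul hcM.le]
      norm_num
      exact div_mul_cancel₀ c hM.ne'
    have hinV : inV N q p b c u := ⟨⟨hmemX, hmass'⟩, hpoho⟩
    have hXb : gradPow N 2 u ≤ A * s ^ e1 := by
      rw [hgp2]
      have hτ2 : τ ^ (2:ℝ) ≤ t0 ^ (2:ℝ) := Real.rpow_le_rpow hτpos.le hτt0 (by norm_num)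
      have hsd : s ^ (2:ℝ) * t0 ^ (2:ℝ) = s ^ e1 := by
        rw [ht0def, hspow, he1def]
      calc s ^ (2:ℝ) * τ ^ (2:ℝ) * A ≤ s ^ (2:ℝ) * t0 ^ (2:ℝ) * A := by
            apply mul_le_mul_of_nonneg_right
              (mul_le_mul_of_nonneg_left hτ2 (Real.rpow_nonneg hs.le _)) hA.le
        _ = A * s ^ e1 := by rw [hsd]; ring
    have hYb : gradPow N q u ≤ B * s ^ e2 := by
      rw [hgpq]
      have hτθ : τ ^ θ ≤ t0 ^ θ := Real.rpow_le_rpow hτpos.le hτt0 hθ0.le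
      have hsd : s ^ q * t0 ^ θ = s ^ e2 := by
        rw [ht0def, hspow, he2def]
      calc s ^ q * τ ^ θ * B ≤ s ^ q * t0 ^ θ * B := by
            apply mul_le_mul_of_nonneg_right
              (mul_le_mul_of_nonneg_left hτθ (Real.rpow_nonneg hs.le _)) hB
        _ = B * s ^ e2 := by rw [hsd]; ring
    have hZb : 0 ≤ pot N p b u := by
      rw [hpotu]
      exact mul_nonneg (mul_nonneg (Real.rpow_nonneg hs.le _) (Real.rpow_nonneg hτpos.le _)) hC.le
    have henergy : energy N q p b u ≤ A * s ^ e1 + B * s ^ e2 := by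
      unfold energy
      have h2 : (1/2) * gradPow N 2 u ≤ gradPow N 2 u := by linarith [hXnn u]
      have h3 : (1/q) * gradPow N q u ≤ gradPow N q u :=
        mul_le_of_le_one_left (hYnn u) (by rw [div_le_one hq0]; linarith)
      have h4 : 0 ≤ (1/p) * pot N p b u := mul_nonneg (by positivity) hZb
      have hX' := le_trans h2 hXb
      have hY' := le_trans h3 hYb
      linarith
    calc gammaVal N q p b c ≤ energy N q p b u := csInf_le (hbdd c) ⟨u, hinV, rfl⟩
      _ ≤ A * sc c ^ e1 + B * sc c ^ e2 := by rw [← hsdef]; exact henergy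
  have part1 : Tendsto (gammaVal N q p b) atTop (𝓝 0) :=
    tendsto_of_tendsto_of_tendsto_of_le_of_le' tendsto_const_nhds hupper_tend
      (Eventually.of_forall hgann) hkey
  refine ⟨part1, fun U hU => ?_⟩
  have hev : ∀ᶠ c in atTop,
      energy N q p b (U c) = gammaVal N q p b c ∧ poho N q p b (U c) = 0 := by
    filter_upwards [eventually_gt_atTop 0] with c hc
    obtain ⟨⟨hS, hP⟩, hmin⟩ := hU c hc
    have hleast : IsLeast {r : ℝ | ∃ v, inV N q p b c v ∧ energy N q p b v = r}
        (energy N q p b (U c)) := by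
      constructor
      · exact ⟨U c, ⟨hS, hP⟩, rfl⟩
      · rintro r ⟨v, hv, rfl⟩
        exact hmin v hv
    refine ⟨?_, hP⟩
    unfold gammaVal
    exact hleast.csInf_eq.symm
  have hT1 : Tendsto (fun c => energy N q p b (U c)) atTop (𝓝 0) :=
    part1.congr' (hev.mono fun c h => h.1.symm)
  have hXsq : Tendsto (fun c => gradPow N 2 (U c)) atTop (𝓝 0) := by
    have hup : Tendsto (fun c => energy N q p b (U c) / (1/2 - 1/σ)) atTop (𝓝 0) := by
      have := hT1.div_const (1/2 - 1/σ)
      simpa using this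
    apply tendsto_of_tendsto_of_tendsto_of_le_of_le' tendsto_const_nhds hup
      (Eventually.of_forall fun c => hXnn _)
    filter_upwards [hev] with c h
    rw [le_div_iff₀ hd1]
    have hid := hrepr (U c) h.2
    have hY := hYnn (U c)
    nlinarith [mul_nonneg hd2.le hY]
  have hYsq : Tendsto (fun c => gradPow N q (U c)) atTop (𝓝 0) := by
    have hup : Tendsto (fun c => energy N q p b (U c) / ((σ - θ)/(q * σ))) atTop (𝓝 0) := by
      have := hT1.div_const ((σ - θ)/(q * σ))
      simpa using this
    apply tendsto_of_tendsto_of_tendsto_of_le_of_le' tendsto_const_nhds hup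
      (Eventually.of_forall fun c => hYnn _)
    filter_upwards [hev] with c h
    rw [le_div_iff₀ hd2]
    have hid := hrepr (U c) h.2
    have hX := hXnn (U c)
    nlinarith [mul_nonneg hd1.le hX]
  refine ⟨hT1, ?_, ?_⟩
  · have hcont : ContinuousAt (fun x : ℝ => x ^ ((1:ℝ)/2)) 0 :=
      Real.continuousAt_rpow_const 0 _ (Or.inr (by norm_num))
    have h2 : Tendsto (fun c => gradPow N 2 (U c) ^ ((1:ℝ)/2)) atTop (𝓝 ((0:ℝ) ^ ((1:ℝ)/2))) :=
      hcont.tendsto.comp hXsq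
    have h0 : ((0:ℝ) ^ ((1:ℝ)/2)) = 0 := Real.zero_rpow (by norm_num)
    rwa [h0] at h2
  · have hcont : ContinuousAt (fun x : ℝ => x ^ (1/q)) 0 :=
      Real.continuousAt_rpow_const 0 _ (Or.inr (by positivity))
    have h2 : Tendsto (fun c => gradPow N q (U c) ^ (1/q)) atTop (𝓝 ((0:ℝ) ^ (1/q))) :=
      hcont.tendsto.comp hYsq
    have h0 : ((0:ℝ) ^ (1/q)) = 0 := Real.zero_rpow (one_div_ne_zero hq0.ne')
    rwa [h0] at h2
end
end
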